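/- arXiv:2211.03493 — 9 statements merged into one kernel-verified Lean document; each statement's English description precedes it below -/
import Mathlib

section
/- If a Banach algebra A is contractible (every bounded derivation from A into any Banach A-bimodule is inner), then A is unital. -/
/-- A Banach `A`-bimodule structure on a normed space `E`:
continuous left and right actions of the Banach algebra `A` that are
associative and commute with each other. -/
structure BanachBimodule (A E : Type) [NonUnitalNormedRing A] [NormedSpace ℂ A]
    [NormedAddCommGroup E] [NormedSpace ℂ E] where
  l : A →L[ℂ] E →L[ℂ] E
  r : A →L[ℂ] E →L[ℂ] E
  l_mul : ∀ a b x, l (a * b) x = l a (l b x)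
  r_mul : ∀ a b x, r (a * b) x = r b (r a x)
  lr_comm : ∀ a b x, l a (r b x) = r b (l a x)

/-- A Banach algebra `A` is contractible if every bounded derivation from `A`
into any Banach `A`-bimodule is inner. -/
def Contractible (A : Type) [NonUnitalNormedRing A] [NormedSpace ℂ A] : Prop :=
  ∀ (E : Type) [NormedAddCommGroup E] [NormedSpace ℂ E] [CompleteSpace E],
    ∀ (B : BanachBimodule A E) (D : A →L[ℂ] E),
      (∀ a b, D (a * b) = B.l a (D b) + B.r b (D a)) →
      ∃ v : E, ∀ a, D a = B.l a v - B.r a v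

/-- a contractible Banach algebra is unital. -/
theorem contractible_unital (A : Type) [NonUnitalNormedRing A] [NormedSpace ℂ A]
    [IsScalarTower ℂ A A] [SMulCommClass ℂ A A] [CompleteSpace A]
    (h : Contractible A) : ∃ e : A, ∀ a : A, e * a = a ∧ a * e = a := by
  -- Bimodule with left action = multiplication, right action = 0.
  set L : A →L[ℂ] A →L[ℂ] A := ContinuousLinearMap.mul ℂ A with hL
  have hLapp : ∀ a x : A, L a x = a * x := fun a x => rfl
  obtain ⟨v, hv⟩ := h A
    { l := L, r := 0,
      l_mul := fun a b x => by simp [hLapp, mul_assoc],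
      r_mul := fun a b x => by simp,
      lr_comm := fun a b x => by simp }
    (ContinuousLinearMap.id ℂ A)
    (fun a b => by simp [hLapp])
  -- v is a right identity: a * v = a.
  have hrv : ∀ a : A, a * v = a := fun a => by
    have := hv a; simpa [hLapp] using this.symm
  -- Bimodule with right action = multiplication, left action = 0.
  obtain ⟨w, hw⟩ := h A
    { l := 0, r := L.flip,
      l_mul := fun a b x => by simp,
      r_mul := fun a b x => by simp [hLapp, mul_assoc],
      lr_comm := fun a b x => by simp }
    (ContinuousLinearMap.id ℂ A)
    (fun a b => by simp [hLapp])
  -- -w is a left identity.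
  have hlw : ∀ a : A, (-w) * a = a := fun a => by
    have := hw a
    simp only [ContinuousLinearMap.coe_id', id_eq, ContinuousLinearMap.zero_apply,
      ContinuousLinearMap.flip_apply, zero_sub] at this
    rw [neg_mul]
    rw [hLapp] at this
    rw [← this]
  refine ⟨v, fun a => ⟨?_, hrv a⟩⟩
  have h1 : (-w) * v = v := hlw v
  have h2 : (-w) * v = -w := hrv (-w)
  rw [← h1.symm.trans h2] at hlw
  exact hlw a
end

section
/- Let A be a contractible Banach algebra with diagonal M = Σ aₙ⊗bₙ (with Σ‖aₙ‖‖bₙ‖ < ∞), and let E, F be unital Banach left A-modules. Then the map Φ: L(E,F) → L(E,F) defined by Φ(T)(x) = Σ aₙ T(bₙ x) is a well-defined bounded linear projection onto the subspace of left A-module morphisms from E to F. -/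
/-- The families `a b : ι → A` represent a diagonal `M = Σ aₙ ⊗ bₙ` of the
unital Banach algebra `A` in the completed projective tensor product `A ⊗^γ A`:
the representing series is absolutely convergent, `Δ(M) = 1`, and
`(c ⊗ 1) M = M (1 ⊗ c)` for all `c` (the latter equality in `A ⊗^γ A` being
tested against all bounded bilinear functionals, which separate the points
of `A ⊗^γ A`). -/
def IsDiagonal {A : Type} [NormedRing A] [NormedAlgebra ℂ A] {ι : Type}
    (a b : ι → A) : Prop :=
  Summable (fun n => ‖a n‖ * ‖b n‖) ∧
  (∑' n, a n * b n) = 1 ∧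
  ∀ (φ : A →L[ℂ] A →L[ℂ] ℂ) (c : A),
    (∑' n, φ (c * a n) (b n)) = ∑' n, φ (a n) (b n * c)

/-- A unital Banach left `A`-module structure on a normed space `E`. -/
structure UnitalLeftModule (A E : Type) [NormedRing A] [NormedAlgebra ℂ A]
    [NormedAddCommGroup E] [NormedSpace ℂ E] where
  l : A →L[ℂ] E →L[ℂ] E
  l_mul : ∀ a b x, l (a * b) x = l a (l b x)
  l_one : ∀ x, l 1 x = x

/-!
`Φ` is the norm-convergent series of the bounded operators `T ↦ aₙ T bₙ` on `L(E,F)`.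
For fixed `T` and `x`, pairing the diagonal identity `(c ⊗ 1) M = M (1 ⊗ c)` with the bounded
bilinear map `(u, v) ↦ u T (v x)` shows that `Φ T` is a module morphism, and `Δ(M) = 1` shows
that `Φ` fixes module morphisms; together these make `Φ` an idempotent.
-/

open ContinuousLinearMap

theorem ContinuousLinearMap.summable_apply₂_of_summable_norm_mul {𝕜 X Y G ι : Type*}
    [NontriviallyNormedField 𝕜] [SeminormedAddCommGroup X] [NormedSpace 𝕜 X]
    [SeminormedAddCommGroup Y] [NormedSpace 𝕜 Y] [NormedAddCommGroup G] [NormedSpace 𝕜 G]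
    [CompleteSpace G] (β : X →L[𝕜] Y →L[𝕜] G) {x : ι → X} {y : ι → Y}
    (h : Summable fun n => ‖x n‖ * ‖y n‖) : Summable fun n => β (x n) (y n) :=
  Summable.of_norm_bounded (h.mul_left ‖β‖) fun _ =>
    (β.le_opNorm₂ _ _).trans_eq (mul_assoc _ _ _)

section

variable {A : Type} [NormedRing A] [NormedAlgebra ℂ A] {ι : Type} {a b : ι → A}

/-- The diagonal identity is only assumed against scalar bilinear forms; Hahn–Banach
extends it to bilinear maps with values in any Banach space. -/
theorem IsDiagonal.tsum_apply₂_mul_left_eq (hd : IsDiagonal a b) {G : Type}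
    [NormedAddCommGroup G] [NormedSpace ℂ G] [CompleteSpace G] (β : A →L[ℂ] A →L[ℂ] G)
    (c : A) : ∑' n, β (c * a n) (b n) = ∑' n, β (a n) (b n * c) := by
  have hl : Summable fun n => β (c * a n) (b n) :=
    (β.bilinearComp (mul ℂ A c) (.id ℂ A)).summable_apply₂_of_summable_norm_mul hd.1
  have hr : Summable fun n => β (a n) (b n * c) :=
    (β.bilinearComp (.id ℂ A) ((mul ℂ A).flip c)).summable_apply₂_of_summable_norm_mul hd.1
  rw [SeparatingDual.eq_iff_forall_dual_eq (R := ℂ)]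
  intro g
  rw [g.map_tsum hl, g.map_tsum hr]
  exact hd.2.2 ((compL ℂ A G ℂ g).comp β) c

variable {E F : Type} [NormedAddCommGroup E] [NormedSpace ℂ E]
  [NormedAddCommGroup F] [NormedSpace ℂ F] (LE : UnitalLeftModule A E) (LF : UnitalLeftModule A F)

def IsModuleHom (T : E →L[ℂ] F) : Prop :=
  ∀ c x, T (LE.l c x) = LF.l c (T x)

noncomputable def sandwich (u v : A) : (E →L[ℂ] F) →L[ℂ] (E →L[ℂ] F) :=
  (compL ℂ E F F (LF.l u)).comp ((compL ℂ E E F).flip (LE.l v))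

@[simp]
theorem sandwich_apply (u v : A) (T : E →L[ℂ] F) :
    sandwich LE LF u v T = (LF.l u).comp (T.comp (LE.l v)) :=
  rfl

theorem norm_sandwich_le (u v : A) :
    ‖sandwich LE LF u v‖ ≤ ‖LF.l‖ * ‖LE.l‖ * (‖u‖ * ‖v‖) := by
  refine opNorm_le_bound _ (by positivity) fun T => ?_
  calc ‖(LF.l u).comp (T.comp (LE.l v))‖
      ≤ ‖LF.l u‖ * (‖T‖ * ‖LE.l v‖) :=
        (opNorm_comp_le _ _).trans (by gcongr; exact opNorm_comp_le _ _)
    _ ≤ ‖LF.l‖ * ‖u‖ * (‖T‖ * (‖LE.l‖ * ‖v‖)) := by gcongr <;> exact le_opNorm _ _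
    _ = ‖LF.l‖ * ‖LE.l‖ * (‖u‖ * ‖v‖) * ‖T‖ := by ring

noncomputable def sandwichForm (T : E →L[ℂ] F) (x : E) : A →L[ℂ] A →L[ℂ] F :=
  ((compL ℂ A F F).flip (T.comp ((apply ℂ E x).comp LE.l))).comp LF.l

@[simp]
theorem sandwichForm_apply (T : E →L[ℂ] F) (x : E) (u v : A) :
    sandwichForm LE LF T x u v = LF.l u (T (LE.l v x)) :=
  rfl

noncomputable def diagonalProjection (a b : ι → A) :
    (E →L[ℂ] F) →L[ℂ] (E →L[ℂ] F) :=
  ∑' n, sandwich LE LF (a n) (b n)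

variable {LE LF} [CompleteSpace F]

theorem IsDiagonal.summable_sandwich (hd : IsDiagonal a b) :
    Summable fun n => sandwich LE LF (a n) (b n) :=
  Summable.of_norm_bounded (E := (E →L[ℂ] F) →L[ℂ] (E →L[ℂ] F)) (hd.1.mul_left _) fun n =>
    norm_sandwich_le LE LF (a n) (b n)

theorem diagonalProjection_apply_apply (hd : IsDiagonal a b) (T : E →L[ℂ] F) (x : E) :
    diagonalProjection LE LF a b T x = ∑' n, LF.l (a n) (T (LE.l (b n) x)) :=
  ((apply ℂ F x).comp (apply ℂ _ T)).map_tsum hd.summable_sandwich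

theorem isModuleHom_diagonalProjection_apply (hd : IsDiagonal a b) (T : E →L[ℂ] F) :
    IsModuleHom LE LF (diagonalProjection LE LF a b T) := by
  intro c x
  have hs := (sandwichForm LE LF T x).summable_apply₂_of_summable_norm_mul hd.1
  calc diagonalProjection LE LF a b T (LE.l c x)
      = ∑' n, sandwichForm LE LF T x (a n) (b n * c) := by
        simp only [diagonalProjection_apply_apply hd, sandwichForm_apply, LE.l_mul]
    _ = ∑' n, sandwichForm LE LF T x (c * a n) (b n) :=
        (hd.tsum_apply₂_mul_left_eq _ c).symm
    _ = ∑' n, LF.l c (sandwichForm LE LF T x (a n) (b n)) := by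
        simp only [sandwichForm_apply, LF.l_mul]
    _ = LF.l c (diagonalProjection LE LF a b T x) := by
        rw [← (LF.l c).map_tsum hs, diagonalProjection_apply_apply hd]; rfl

theorem diagonalProjection_apply_of_isModuleHom [CompleteSpace A] (hd : IsDiagonal a b)
    {T : E →L[ℂ] F} (hT : IsModuleHom LE LF T) :
    diagonalProjection LE LF a b T = T := by
  ext x
  have hab : Summable fun n => a n * b n := (mul ℂ A).summable_apply₂_of_summable_norm_mul hd.1
  calc diagonalProjection LE LF a b T x
      = ∑' n, (apply ℂ F (T x)).comp LF.l (a n * b n) := by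
        simp only [diagonalProjection_apply_apply hd, hT _, ← LF.l_mul]; rfl
    _ = T x := by
        rw [← ((apply ℂ F (T x)).comp LF.l).map_tsum hab, hd.2.1]
        exact LF.l_one (T x)

end

theorem diagonal_projection_onto_module_morphisms_general
    (A : Type) [NormedRing A] [NormedAlgebra ℂ A] [CompleteSpace A]
    (a b : ℕ → A) (hdiag : IsDiagonal a b)
    (E F : Type) [NormedAddCommGroup E] [NormedSpace ℂ E]
    [NormedAddCommGroup F] [NormedSpace ℂ F] [CompleteSpace F]
    (LE : UnitalLeftModule A E) (LF : UnitalLeftModule A F) :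
    ∃ Φ : (E →L[ℂ] F) →L[ℂ] (E →L[ℂ] F),
      (∀ T x, Φ T x = ∑' n, LF.l (a n) (T (LE.l (b n) x))) ∧
      (∀ T, Φ (Φ T) = Φ T) ∧
      (∀ T c x, (Φ T) (LE.l c x) = LF.l c ((Φ T) x)) ∧
      (∀ T : E →L[ℂ] F, (∀ c x, T (LE.l c x) = LF.l c (T x)) → Φ T = T) :=
  ⟨diagonalProjection LE LF a b, diagonalProjection_apply_apply hdiag,
    fun T => diagonalProjection_apply_of_isModuleHom hdiag
      (isModuleHom_diagonalProjection_apply hdiag T),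
    isModuleHom_diagonalProjection_apply hdiag,
    fun _ => diagonalProjection_apply_of_isModuleHom hdiag⟩

/-- given a contractible Banach algebra `A` with diagonal
`M = Σ aₙ ⊗ bₙ` and unital Banach left `A`-modules `E`, `F`, the map
`Φ(T)(x) = Σ aₙ T(bₙ x)` is a well-defined bounded linear projection of
`L(E,F)` onto the subspace of left `A`-module morphisms. -/
theorem diagonal_projection_onto_module_morphisms
    (A : Type) [NormedRing A] [NormedAlgebra ℂ A] [CompleteSpace A]
    (hA : Contractible A) (a b : ℕ → A) (hdiag : IsDiagonal a b)
    (E F : Type) [NormedAddCommGroup E] [NormedSpace ℂ E] [CompleteSpace E]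
    [NormedAddCommGroup F] [NormedSpace ℂ F] [CompleteSpace F]
    (LE : UnitalLeftModule A E) (LF : UnitalLeftModule A F) :
    ∃ Φ : (E →L[ℂ] F) →L[ℂ] (E →L[ℂ] F),
      (∀ T x, Φ T x = ∑' n, LF.l (a n) (T (LE.l (b n) x))) ∧
      (∀ T, Φ (Φ T) = Φ T) ∧
      (∀ T c x, (Φ T) (LE.l c x) = LF.l c ((Φ T) x)) ∧
      (∀ T : E →L[ℂ] F, (∀ c x, T (LE.l c x) = LF.l c (T x)) → Φ T = T) :=
  diagonal_projection_onto_module_morphisms_general A a b hdiag E F LE LF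
end

section
/- Let A be a contractible Banach algebra, E a unital Banach left A-module, and F a closed submodule of E that is topologically complemented as a Banach subspace. Then F admits a topological complement in E which is also a closed submodule. -/
/-!
Let `p` be a bounded projection onto `F`. The bounded operators on `E` that map `E` into `F`
and vanish on `F` form a closed subspace `N`, a Banach `A`-bimodule under `a • T = L_a ∘ T`,
`T • a = T ∘ L_a`, and `a ↦ L_a ∘ p - p ∘ L_a` is a bounded derivation into `N`. By
contractibility it is inner, `L_a ∘ p - p ∘ L_a = L_a ∘ v - v ∘ L_a` for some `v ∈ N`;
then `q = p - v` is still a projection onto `F` but commutes with every `L_a`, so `ker q` is a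
closed submodule complementing `F`.
-/

open ContinuousLinearMap

noncomputable section

section Restrict

variable {𝕜 A M : Type*} [NontriviallyNormedField 𝕜] [SeminormedAddCommGroup A]
  [NormedSpace 𝕜 A] [SeminormedAddCommGroup M] [NormedSpace 𝕜 M]

def ContinuousLinearMap.restrict₂ (f : A →L[𝕜] M →L[𝕜] M) (N : Submodule 𝕜 M)
    (hN : ∀ a, ∀ x ∈ N, f a x ∈ N) : A →L[𝕜] N →L[𝕜] N :=
  LinearMap.mkContinuous₂
    (LinearMap.mk₂ 𝕜 (fun a x => ⟨f a x, hN a x x.2⟩)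
      (fun _ _ _ => by ext; simp) (fun _ _ _ => by ext; simp)
      (fun _ _ _ => by ext; simp) (fun _ _ _ => by ext; simp))
    ‖f‖ fun a x => f.le_opNorm₂ a x

end Restrict

section OpsIntoVanishingOn

variable {𝕜 E : Type*} [NontriviallyNormedField 𝕜] [NormedAddCommGroup E] [NormedSpace 𝕜 E]
  {F : Submodule 𝕜 E}

variable (F) in
def opsIntoVanishingOn : Submodule 𝕜 (E →L[𝕜] E) where
  carrier := {T | (∀ x, T x ∈ F) ∧ ∀ x ∈ F, T x = 0}
  add_mem' hT hS :=
    ⟨fun x => F.add_mem (hT.1 x) (hS.1 x), fun x hx => by simp [hT.2 x hx, hS.2 x hx]⟩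
  zero_mem' := ⟨fun _ => F.zero_mem, fun _ _ => rfl⟩
  smul_mem' c _ hT := ⟨fun x => F.smul_mem c (hT.1 x), fun x hx => by simp [hT.2 x hx]⟩

theorem isClosed_opsIntoVanishingOn (hF : IsClosed (F : Set E)) :
    IsClosed (opsIntoVanishingOn F : Set (E →L[𝕜] E)) := by
  have : (opsIntoVanishingOn F : Set (E →L[𝕜] E)) =
      (⋂ x, {T | T x ∈ F}) ∩ ⋂ x ∈ F, {T | T x = 0} := by
    ext T
    simp [opsIntoVanishingOn]
  rw [this]
  exact (isClosed_iInter fun x => hF.preimage (apply 𝕜 E x).continuous).inter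
    (isClosed_biInter fun x _ => isClosed_singleton.preimage (apply 𝕜 E x).continuous)

theorem comp_mem_opsIntoVanishingOn {T S : E →L[𝕜] E} (hT : ∀ x ∈ F, T x ∈ F)
    (hS : S ∈ opsIntoVanishingOn F) : T ∘L S ∈ opsIntoVanishingOn F :=
  ⟨fun x => hT _ (hS.1 x), fun x hx => by simp [hS.2 x hx]⟩

theorem mem_opsIntoVanishingOn_comp {T S : E →L[𝕜] E} (hT : ∀ x ∈ F, T x ∈ F)
    (hS : S ∈ opsIntoVanishingOn F) : S ∘L T ∈ opsIntoVanishingOn F :=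
  ⟨fun _ => hS.1 _, fun x hx => hS.2 _ (hT x hx)⟩

theorem commutator_mem_opsIntoVanishingOn {T p : E →L[𝕜] E} (hT : ∀ x ∈ F, T x ∈ F)
    (hp : LinearMap.IsProj F p) : T ∘L p - p ∘L T ∈ opsIntoVanishingOn F :=
  ⟨fun x => F.sub_mem (hT _ (hp.map_mem x)) (hp.map_mem _),
    fun x hx => by simp [hp.map_id x hx, hp.map_id _ (hT x hx)]⟩

theorem LinearMap.IsProj.sub_of_mem_opsIntoVanishingOn {p v : E →L[𝕜] E}
    (hp : LinearMap.IsProj F p) (hv : v ∈ opsIntoVanishingOn F) :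
    LinearMap.IsProj F (p - v) :=
  ⟨fun x => F.sub_mem (hp.map_mem x) (hv.1 x), fun x hx => by simp [hp.map_id x hx, hv.2 x hx]⟩

end OpsIntoVanishingOn

section Commutator

variable {A E : Type} [NonUnitalNormedRing A] [NormedSpace ℂ A] [NormedAddCommGroup E]
  [NormedSpace ℂ E] (l : A →L[ℂ] E →L[ℂ] E) {F : Submodule ℂ E}
  (hF : ∀ a, ∀ x ∈ F, l a x ∈ F)

def opsBimodule (hl : ∀ a b x, l (a * b) x = l a (l b x)) :
    BanachBimodule A (opsIntoVanishingOn F) where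
  l := (compL ℂ E E E ∘L l).restrict₂ _ fun a _ ↦ comp_mem_opsIntoVanishingOn (hF a)
  r := ((compL ℂ E E E).flip ∘L l).restrict₂ _ fun a _ ↦ mem_opsIntoVanishingOn_comp (hF a)
  l_mul a b T := by ext x; exact hl a b (T.1 x)
  r_mul a b T := by ext x; exact congr(T.1 $(hl a b x))
  lr_comm a b T := rfl

def commutatorDerivation {p : E →L[ℂ] E} (hp : LinearMap.IsProj F p) :
    A →L[ℂ] opsIntoVanishingOn F :=
  (((compL ℂ E E E).flip p - compL ℂ E E E p) ∘L l).codRestrict _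
    fun a => commutator_mem_opsIntoVanishingOn (hF a) hp

theorem commutatorDerivation_mul (hl : ∀ a b x, l (a * b) x = l a (l b x))
    {p : E →L[ℂ] E} (hp : LinearMap.IsProj F p) (a b : A) :
    commutatorDerivation l hF hp (a * b) =
      (opsBimodule l hF hl).l a (commutatorDerivation l hF hp b) +
        (opsBimodule l hF hl).r b (commutatorDerivation l hF hp a) := by
  ext x
  change l (a * b) (p x) - p (l (a * b) x) =
    l a (l b (p x) - p (l b x)) + (l a (p (l b x)) - p (l a (l b x)))
  rw [hl, hl, map_sub]
  abel

end Commutator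

theorem exists_isProj_commute_of_contractible {A E : Type} [NonUnitalNormedRing A]
    [NormedSpace ℂ A] [NormedAddCommGroup E] [NormedSpace ℂ E] [CompleteSpace E]
    (hA : Contractible A) (l : A →L[ℂ] E →L[ℂ] E)
    (hl : ∀ a b x, l (a * b) x = l a (l b x))
    {F : Submodule ℂ E} (hFc : IsClosed (F : Set E)) (hF : ∀ a, ∀ x ∈ F, l a x ∈ F)
    {p : E →L[ℂ] E} (hp : LinearMap.IsProj F p) :
    ∃ q : E →L[ℂ] E, LinearMap.IsProj F q ∧ ∀ a x, l a (q x) = q (l a x) := by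
  have := (isClosed_opsIntoVanishingOn hFc).completeSpace_coe
  obtain ⟨v, hv⟩ := hA _ (opsBimodule l hF hl) _ (commutatorDerivation_mul l hF hl hp)
  refine ⟨p - v, hp.sub_of_mem_opsIntoVanishingOn v.2, fun a x => ?_⟩
  have hvx : l a (p x) - p (l a x) = l a (v.1 x) - v.1 (l a x) :=
    congr($(congr(Subtype.val $(hv a))) x)
  simp only [sub_apply, map_sub]
  exact sub_eq_sub_iff_sub_eq_sub.mp hvx

end

theorem complemented_submodule_of_contractible_general
    (A : Type) [NormedRing A] [NormedAlgebra ℂ A]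
    (hA : Contractible A)
    (E : Type) [NormedAddCommGroup E] [NormedSpace ℂ E] [CompleteSpace E]
    (L : UnitalLeftModule A E)
    (F : Submodule ℂ E) (hFclosed : IsClosed (F : Set E))
    (hFmod : ∀ c : A, ∀ x ∈ F, L.l c x ∈ F)
    (hcompl : ∃ p : E →L[ℂ] E, (∀ x, p x ∈ F) ∧ ∀ x ∈ F, p x = x) :
    ∃ G : Submodule ℂ E, IsClosed (G : Set E) ∧
      (∀ c : A, ∀ x ∈ G, L.l c x ∈ G) ∧ IsCompl F G := by
  obtain ⟨p, hpF, hpid⟩ := hcompl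
  obtain ⟨q, hq, hcomm⟩ :=
    exists_isProj_commute_of_contractible hA L.l L.l_mul hFclosed hFmod ⟨hpF, hpid⟩
  refine ⟨LinearMap.ker (q : E →ₗ[ℂ] E), q.isClosed_ker, fun c x hx => ?_,
    LinearMap.IsProj.isCompl (f := (q : E →ₗ[ℂ] E)) ⟨hq.map_mem, hq.map_id⟩⟩
  have hx : q x = 0 := hx
  show q (L.l c x) = 0
  rw [← hcomm, hx, map_zero]

/-- over a contractible Banach algebra, a topologically
complemented closed submodule of a unital Banach left module admits a
topological complement which is itself a closed submodule. -/
theorem complemented_submodule_of_contractible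
    (A : Type) [NormedRing A] [NormedAlgebra ℂ A] [CompleteSpace A]
    (hA : Contractible A)
    (E : Type) [NormedAddCommGroup E] [NormedSpace ℂ E] [CompleteSpace E]
    (L : UnitalLeftModule A E)
    (F : Submodule ℂ E) (hFclosed : IsClosed (F : Set E))
    (hFmod : ∀ c : A, ∀ x ∈ F, L.l c x ∈ F)
    (hcompl : ∃ p : E →L[ℂ] E, (∀ x, p x ∈ F) ∧ ∀ x ∈ F, p x = x) :
    ∃ G : Submodule ℂ E, IsClosed (G : Set E) ∧
      (∀ c : A, ∀ x ∈ G, L.l c x ∈ G) ∧ IsCompl F G :=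
  complemented_submodule_of_contractible_general A hA E L F hFclosed hFmod hcompl
end

section
/- If A and A' are contractible Banach algebras with diagonals M = Σ aₙ⊗bₙ and M' = Σ a'ₘ⊗b'ₘ, then Σₙ,ₘ (aₙ⊗a'ₘ)⊗(bₙ⊗b'ₘ) is a diagonal for the projective tensor product Banach algebra A ⊗^γ A'; in particular A ⊗^γ A' is contractible. -/
/-- A realization of the completed projective tensor product `A ⊗^γ A'` of two
unital Banach algebras as a Banach algebra `B`, characterized by its universal
property: a contractive multiplicative bilinear map `ι` with dense span such
that every bounded bilinear map into a Banach space lifts contractively. -/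
structure ProjTensorAlg (A A' B : Type)
    [NormedRing A] [NormedAlgebra ℂ A] [NormedRing A'] [NormedAlgebra ℂ A']
    [NormedRing B] [NormedAlgebra ℂ B] where
  ι : A →L[ℂ] A' →L[ℂ] B
  ι_mul : ∀ a a' c c', ι a a' * ι c c' = ι (a * c) (a' * c')
  ι_one : ι 1 1 = 1
  norm_ι : ∀ a a', ‖ι a a'‖ ≤ ‖a‖ * ‖a'‖
  dense_span : Dense
    (Submodule.span ℂ (Set.range fun p : A × A' => ι p.1 p.2) : Set B)
  lift : ∀ (W : Type) [NormedAddCommGroup W] [NormedSpace ℂ W] [CompleteSpace W],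
    ∀ φ : A →L[ℂ] A' →L[ℂ] W,
      ∃ L : B →L[ℂ] W, (∀ a a', L (ι a a') = φ a a') ∧ ‖L‖ ≤ ‖φ‖

/-!
If `Σ aₙ ⊗ bₙ` is a diagonal and `D` a derivation, `v = Σ aₙ · D(bₙ)` implements `D`: moving `c`
across the diagonal gives `c · v = D(c) + v · c`. For the tensor product, `Δ` is multiplicative on
elementary tensors, so the product diagonal has `Δ = 1 ⊗ 1 = 1`. Its commutation identity against
`u ⊗ u'` follows by moving `u` across the first diagonal and then `u'` across the second (Fubini for
an absolutely convergent double series); both sides are continuous in `c`, and elementary tensors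
span a dense subspace.
-/

open ContinuousLinearMap

section Summability

variable {ι κ 𝕜 E F G : Type*} [NontriviallyNormedField 𝕜]
  [NormedAddCommGroup E] [NormedSpace 𝕜 E] [NormedAddCommGroup F] [NormedSpace 𝕜 F]
  [NormedAddCommGroup G] [NormedSpace 𝕜 G]

theorem ContinuousLinearMap.summable_apply₂ [CompleteSpace G] (T : E →L[𝕜] F →L[𝕜] G)
    {x : ι → E} {y : ι → F} (h : Summable fun i => ‖x i‖ * ‖y i‖) :
    Summable fun i => T (x i) (y i) :=
  .of_norm_bounded (h.mul_left ‖T‖) fun _ => (T.le_opNorm₂ _ _).trans_eq (mul_assoc _ _ _)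

theorem ContinuousLinearMap.tsum_apply₂_prod (T : E →L[𝕜] F →L[𝕜] G) {x : ι → E} {y : κ → F}
    (hx : Summable x) (hy : Summable y) (hxy : Summable fun p : ι × κ => T (x p.1) (y p.2)) :
    ∑' p : ι × κ, T (x p.1) (y p.2) = T (∑' i, x i) (∑' j, y j) := by
  rw [hxy.tsum_prod' fun i => hy.mapL (T (x i))]
  calc ∑' i, ∑' j, T (x i) (y j) = ∑' i, T.flip (∑' j, y j) (x i) :=
        tsum_congr fun i => ((T (x i)).map_tsum hy).symm
    _ = T (∑' i, x i) (∑' j, y j) := ((T.flip _).map_tsum hx).symm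

theorem Summable.norm_mul_norm_mul_left {R : Type*} [NormedRing R] {x y : ι → R}
    (h : Summable fun i => ‖x i‖ * ‖y i‖) (u : R) : Summable fun i => ‖u * x i‖ * ‖y i‖ :=
  .of_nonneg_of_le (fun _ => by positivity)
    (fun _ => (mul_le_mul_of_nonneg_right (norm_mul_le _ _) (norm_nonneg _)).trans_eq
      (mul_assoc _ _ _))
    (h.mul_left ‖u‖)

theorem Summable.norm_mul_norm_mul_right {R : Type*} [NormedRing R] {x y : ι → R}
    (h : Summable fun i => ‖x i‖ * ‖y i‖) (u : R) : Summable fun i => ‖x i‖ * ‖y i * u‖ :=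
  .of_nonneg_of_le (fun _ => by positivity)
    (fun _ => (mul_le_mul_of_nonneg_left (norm_mul_le _ _) (norm_nonneg _)).trans_eq
      (by ring))
    (h.mul_left ‖u‖)

theorem tsum_prod_congr_fst [CompleteSpace E] {f g : ι × κ → E} (hf : Summable f)
    (hg : Summable g) (h : ∀ i, ∑' j, f (i, j) = ∑' j, g (i, j)) : ∑' p, f p = ∑' p, g p := by
  rw [hf.tsum_prod, hg.tsum_prod]
  exact tsum_congr h

theorem tsum_prod_congr_snd [CompleteSpace E] {f g : ι × κ → E} (hf : Summable f)
    (hg : Summable g) (h : ∀ j, ∑' i, f (i, j) = ∑' i, g (i, j)) : ∑' p, f p = ∑' p, g p := by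
  rw [← (Equiv.prodComm κ ι).tsum_eq f, ← (Equiv.prodComm κ ι).tsum_eq g]
  exact tsum_prod_congr_fst ((Equiv.prodComm κ ι).summable_iff.2 hf)
    ((Equiv.prodComm κ ι).summable_iff.2 hg) h

end Summability

section Diagonal

variable {A : Type} [NormedRing A] [NormedAlgebra ℂ A] {ι : Type} {a b : ι → A}

theorem IsDiagonal.summable_norm_mul (h : IsDiagonal a b) : Summable fun i => ‖a i * b i‖ :=
  .of_nonneg_of_le (fun _ => norm_nonneg _) (fun _ => norm_mul_le _ _) h.1

/-- A non-summable series has `tsum` zero, so `Δ(M) = 1` forces summability unless `A` is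
trivial. -/
theorem IsDiagonal.summable_mul (h : IsDiagonal a b) : Summable fun i => a i * b i := by
  by_contra hs
  have : Subsingleton A :=
    subsingleton_of_zero_eq_one ((tsum_eq_zero_of_not_summable hs).symm.trans h.2.1)
  exact hs (Subsingleton.elim 0 (fun i => a i * b i) ▸ summable_zero)

theorem IsDiagonal.tsum_apply_mul_comm {W : Type*} [NormedAddCommGroup W] [NormedSpace ℂ W]
    [CompleteSpace W] (h : IsDiagonal a b) (φ : A →L[ℂ] A →L[ℂ] W) (c : A) :
    ∑' i, φ (c * a i) (b i) = ∑' i, φ (a i) (b i * c) := by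
  refine (SeparatingDual.eq_iff_forall_dual_eq (R := ℂ)).2 fun g => ?_
  rw [g.map_tsum (φ.summable_apply₂ (h.1.norm_mul_norm_mul_left c)),
    g.map_tsum (φ.summable_apply₂ (h.1.norm_mul_norm_mul_right c))]
  exact h.2.2 ((compL ℂ A W ℂ g).comp φ) c

end Diagonal

section Bimodule

variable {A : Type} [NormedRing A] [NormedAlgebra ℂ A] {ι : Type} {a b : ι → A}
  {E : Type} [NormedAddCommGroup E] [NormedSpace ℂ E]

def BanachBimodule.IsDerivation (M : BanachBimodule A E) (D : A →L[ℂ] E) : Prop :=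
  ∀ a b, D (a * b) = M.l a (D b) + M.r b (D a)

theorem BanachBimodule.IsDerivation.l_r_one_apply_one {M : BanachBimodule A E} {D : A →L[ℂ] E}
    (hD : M.IsDerivation D) (c : A) : M.l c (M.r 1 (D 1)) = 0 := by
  have h := congrArg (M.r 1) (hD c 1)
  rw [mul_one, map_add, ← M.r_mul, one_mul, right_eq_add] at h
  rw [M.lr_comm, h]

theorem IsDiagonal.l_tsum_eq [CompleteSpace E] (h : IsDiagonal a b)
    {M : BanachBimodule A E} {D : A →L[ℂ] E} (hD : M.IsDerivation D) (c : A) :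
    M.l c (∑' i, M.l (a i) (D (b i))) = M.l 1 (D c) + M.r c (∑' i, M.l (a i) (D (b i))) := by
  let φ := M.l.bilinearComp (ContinuousLinearMap.id ℂ A) D
  have hv : Summable fun i => M.l (a i) (D (b i)) := φ.summable_apply₂ h.1
  have hs : Summable fun i => M.l (a i * b i) (D c) := h.summable_mul.mapL (M.l.flip (D c))
  have hone : ∑' i, M.l (a i * b i) (D c) = M.l 1 (D c) := by
    rw [← h.2.1]
    exact ((M.l.flip (D c)).map_tsum h.summable_mul).symm
  calc M.l c (∑' i, M.l (a i) (D (b i))) = ∑' i, M.l (c * a i) (D (b i)) := by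
        rw [(M.l c).map_tsum hv]
        exact tsum_congr fun i => (M.l_mul c (a i) _).symm
    _ = ∑' i, M.l (a i) (D (b i * c)) := h.tsum_apply_mul_comm φ c
    _ = ∑' i, (M.l (a i * b i) (D c) + M.r c (M.l (a i) (D (b i)))) :=
        tsum_congr fun i => by rw [hD, map_add, ← M.l_mul, M.lr_comm]
    _ = M.l 1 (D c) + M.r c (∑' i, M.l (a i) (D (b i))) := by
        rw [hs.tsum_add (hv.mapL (M.r c)), hone, (M.r c).map_tsum hv]

theorem IsDiagonal.contractible (h : IsDiagonal a b) : Contractible A := by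
  intro E _ _ _ M D (hD : M.IsDerivation D)
  -- `M.l 1` need not be the identity, whence the correction term.
  refine ⟨∑' i, M.l (a i) (D (b i)) - M.r 1 (D 1), fun c => ?_⟩
  have hc : D c = M.l 1 (D c) + M.r c (D 1) := by simpa using hD 1 c
  rw [map_sub, map_sub, h.l_tsum_eq hD, hD.l_r_one_apply_one, ← M.r_mul, one_mul]
  conv_lhs => rw [hc]
  abel

end Bimodule

theorem tsum_apply_mul_comm_of_dense_span {B : Type*} [NormedRing B] [NormedAlgebra ℂ B]
    {ι : Type*} {M N : ι → B} (hMN : Summable fun i => ‖M i‖ * ‖N i‖) {S : Set B}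
    (hS : Dense (Submodule.span ℂ S : Set B)) (φ : B →L[ℂ] B →L[ℂ] ℂ)
    (hφ : ∀ s ∈ S, ∑' i, φ (s * M i) (N i) = ∑' i, φ (M i) (N i * s)) (c : B) :
    ∑' i, φ (c * M i) (N i) = ∑' i, φ (M i) (N i * c) := by
  have eval : ∀ (T : B →L[ℂ] B →L[ℂ] B →L[ℂ] ℂ) (s : B),
      (∑' i, T (M i) (N i)) s = ∑' i, T (M i) (N i) s :=
    fun T s => (apply ℂ ℂ s).map_tsum (T.summable_apply₂ hMN)
  -- `L x y c = φ (c * x) y` and `R x y c = φ x (y * c)`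
  let L := (precompL B φ).bilinearComp (mul ℂ B).flip (ContinuousLinearMap.id ℂ B)
  let R := (precompR B φ).bilinearComp (ContinuousLinearMap.id ℂ B) (mul ℂ B)
  have hLR : ∑' i, L (M i) (N i) = ∑' i, R (M i) (N i) :=
    ext_on hS fun s hs => by rw [eval, eval]; exact hφ s hs
  have := DFunLike.congr_fun hLR c
  rwa [eval, eval] at this

namespace ProjTensorAlg

variable {A A' B : Type} [NormedRing A] [NormedAlgebra ℂ A] [NormedRing A'] [NormedAlgebra ℂ A']
  [NormedRing B] [NormedAlgebra ℂ B] (P : ProjTensorAlg A A' B) {ι κ : Type}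

theorem summable_norm_mul_norm {x y : ι → A} {x' y' : κ → A'}
    (h : Summable fun i => ‖x i‖ * ‖y i‖) (h' : Summable fun j => ‖x' j‖ * ‖y' j‖) :
    Summable fun p : ι × κ => ‖P.ι (x p.1) (x' p.2)‖ * ‖P.ι (y p.1) (y' p.2)‖ :=
  .of_nonneg_of_le (fun _ => by positivity)
    (fun _ => (mul_le_mul (P.norm_ι _ _) (P.norm_ι _ _) (norm_nonneg _) (by positivity)).trans_eq
      (by ring))
    (h.mul_of_nonneg h' (fun _ => by positivity) (fun _ => by positivity))

variable {a b : ι → A} {a' b' : κ → A'}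

theorem tsum_ι_mul_ι [CompleteSpace B] (h : IsDiagonal a b) (h' : IsDiagonal a' b') :
    ∑' p : ι × κ, P.ι (a p.1) (a' p.2) * P.ι (b p.1) (b' p.2) = 1 := by
  have hprod : Summable fun p : ι × κ => P.ι (a p.1 * b p.1) (a' p.2 * b' p.2) :=
    P.ι.summable_apply₂ (h.summable_norm_mul.mul_of_nonneg h'.summable_norm_mul
      (fun _ => norm_nonneg _) (fun _ => norm_nonneg _))
  simp only [P.ι_mul]
  rw [P.ι.tsum_apply₂_prod h.summable_mul h'.summable_mul hprod, h.2.1, h'.2.1, P.ι_one]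

theorem tsum_apply_ι_mul_comm (h : IsDiagonal a b) (h' : IsDiagonal a' b')
    (φ : B →L[ℂ] B →L[ℂ] ℂ) (u : A) (u' : A') :
    ∑' p : ι × κ, φ (P.ι u u' * P.ι (a p.1) (a' p.2)) (P.ι (b p.1) (b' p.2)) =
      ∑' p : ι × κ, φ (P.ι (a p.1) (a' p.2)) (P.ι (b p.1) (b' p.2) * P.ι u u') := by
  have hsum : ∀ (x y : ι → A) (x' y' : κ → A'), Summable (fun i => ‖x i‖ * ‖y i‖) →
      Summable (fun j => ‖x' j‖ * ‖y' j‖) →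
      Summable fun p : ι × κ => φ (P.ι (x p.1) (x' p.2)) (P.ι (y p.1) (y' p.2)) :=
    fun _ _ _ _ hx hx' => φ.summable_apply₂ (P.summable_norm_mul_norm hx hx')
  simp only [P.ι_mul]
  have h₁ := hsum (fun i => u * a i) b (fun j => u' * a' j) b'
    (h.1.norm_mul_norm_mul_left u) (h'.1.norm_mul_norm_mul_left u')
  have h₂ := hsum a (fun i => b i * u) (fun j => u' * a' j) b'
    (h.1.norm_mul_norm_mul_right u) (h'.1.norm_mul_norm_mul_left u')
  have h₃ := hsum a (fun i => b i * u) a' (fun j => b' j * u')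
    (h.1.norm_mul_norm_mul_right u) (h'.1.norm_mul_norm_mul_right u')
  calc _ = ∑' p : ι × κ, φ (P.ι (a p.1) (u' * a' p.2)) (P.ι (b p.1 * u) (b' p.2)) :=
        tsum_prod_congr_snd h₁ h₂ fun j =>
          h.2.2 (φ.bilinearComp (P.ι.flip (u' * a' j)) (P.ι.flip (b' j))) u
    _ = _ := tsum_prod_congr_fst h₂ h₃ fun i =>
          h'.2.2 (φ.bilinearComp (P.ι (a i)) (P.ι (b i * u))) u'

theorem isDiagonal [CompleteSpace B] (h : IsDiagonal a b) (h' : IsDiagonal a' b') :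
    IsDiagonal (fun p : ι × κ => P.ι (a p.1) (a' p.2)) (fun p => P.ι (b p.1) (b' p.2)) :=
  ⟨P.summable_norm_mul_norm h.1 h'.1, P.tsum_ι_mul_ι h h', fun φ =>
    tsum_apply_mul_comm_of_dense_span (P.summable_norm_mul_norm h.1 h'.1) P.dense_span φ
      (by rintro _ ⟨⟨u, u'⟩, rfl⟩; exact P.tsum_apply_ι_mul_comm h h' φ u u')⟩

end ProjTensorAlg

theorem diagonal_of_projTensorAlg_general
    (A A' : Type) [NormedRing A] [NormedAlgebra ℂ A]
    [NormedRing A'] [NormedAlgebra ℂ A']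
    (a b : ℕ → A) (hdiag : IsDiagonal a b)
    (a' b' : ℕ → A') (hdiag' : IsDiagonal a' b')
    (B : Type) [NormedRing B] [NormedAlgebra ℂ B] [CompleteSpace B]
    (P : ProjTensorAlg A A' B) :
    IsDiagonal (fun p : ℕ × ℕ => P.ι (a p.1) (a' p.2))
      (fun p : ℕ × ℕ => P.ι (b p.1) (b' p.2)) ∧
    Contractible B :=
  ⟨P.isDiagonal hdiag hdiag', (P.isDiagonal hdiag hdiag').contractible⟩

/-- if `A`, `A'` are contractible Banach algebras with diagonals
`Σ aₙ ⊗ bₙ` and `Σ a'ₘ ⊗ b'ₘ`, then `Σₙ,ₘ (aₙ⊗a'ₘ) ⊗ (bₙ⊗b'ₘ)` is a diagonal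
for `A ⊗^γ A'`; in particular `A ⊗^γ A'` is contractible. -/
theorem diagonal_of_projTensorAlg
    (A A' : Type) [NormedRing A] [NormedAlgebra ℂ A] [CompleteSpace A]
    [NormedRing A'] [NormedAlgebra ℂ A'] [CompleteSpace A']
    (hA : Contractible A) (hA' : Contractible A')
    (a b : ℕ → A) (hdiag : IsDiagonal a b)
    (a' b' : ℕ → A') (hdiag' : IsDiagonal a' b')
    (B : Type) [NormedRing B] [NormedAlgebra ℂ B] [CompleteSpace B]
    (P : ProjTensorAlg A A' B) :
    IsDiagonal (fun p : ℕ × ℕ => P.ι (a p.1) (a' p.2))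
      (fun p : ℕ × ℕ => P.ι (b p.1) (b' p.2)) ∧
    Contractible B :=
  diagonal_of_projTensorAlg_general A A' a b hdiag a' b' hdiag' B P
end

section
/- Let A be a contractible Banach algebra and E a unital Banach A-bimodule. If F is a closed sub-bimodule of E that is topologically complemented as a Banach subspace, then F admits a topological complement in E which is also a closed sub-bimodule. -/
/-!
Given a bounded projection `p` onto `F`, let `A` act on `E →L[ℂ] E` by composing with the left
action on either side. Then `a ↦ a • p - p • a` is an inner derivation with values in the closed
sub-bimodule of operators that map `E` into `F` and vanish on `F`. By contractibility it is also
implemented by some `v` in that sub-bimodule, and then `p - v` is a projection onto `F` commuting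
with the left action. Repeating the argument for the right action, inside the commutant of the left
action, gives a projection `q` onto `F` commuting with both actions, and `ker q` is the required
complement.
-/

section

variable {A : Type} [NonUnitalNormedRing A] [NormedSpace ℂ A]

namespace ContinuousLinearMap

variable {X : Type} [NormedAddCommGroup X] [NormedSpace ℂ X]

noncomputable def restrictAction (f : A →L[ℂ] X →L[ℂ] X) (N : Submodule ℂ X)
    (hf : ∀ a, ∀ x ∈ N, f a x ∈ N) : A →L[ℂ] N →L[ℂ] N :=
  LinearMap.mkContinuous₂
    (LinearMap.mk₂ ℂ (fun a x => ⟨f a x, hf a x x.2⟩)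
      (fun _ _ _ => by ext; simp) (fun _ _ _ => by ext; simp)
      (fun _ _ _ => by ext; simp) (fun _ _ _ => by ext; simp))
    ‖f‖ (fun a x => f.le_opNorm₂ a x)

end ContinuousLinearMap

namespace BanachBimodule

variable {X : Type} [NormedAddCommGroup X] [NormedSpace ℂ X]

noncomputable def restrict (B : BanachBimodule A X) (N : Submodule ℂ X)
    (hl : ∀ a, ∀ x ∈ N, B.l a x ∈ N) (hr : ∀ a, ∀ x ∈ N, B.r a x ∈ N) :
    BanachBimodule A N where
  l := B.l.restrictAction N hl
  r := B.r.restrictAction N hr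
  l_mul a b x := Subtype.ext (B.l_mul a b x)
  r_mul a b x := Subtype.ext (B.r_mul a b x)
  lr_comm a b x := Subtype.ext (B.lr_comm a b x)

variable {R : Type} [NormedRing R] [NormedAlgebra ℂ R]

/-- `A` acting on `R` by `a • T = ρ a * T` and `T • a = T * ρ a`. -/
noncomputable def ofHom (ρ : A →L[ℂ] R) (hρ : ∀ a b, ρ (a * b) = ρ a * ρ b) :
    BanachBimodule A R where
  l := (ContinuousLinearMap.mul ℂ R).comp ρ
  r := (ContinuousLinearMap.mul ℂ R).flip.comp ρ
  l_mul a b T := by simp [hρ, mul_assoc]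
  r_mul a b T := by simp [hρ, mul_assoc]
  lr_comm a b T := by simp [mul_assoc]

/-- `A` acting on `R` by `a • T = T * σ a` and `T • a = σ a * T`. -/
noncomputable def ofAntiHom (σ : A →L[ℂ] R) (hσ : ∀ a b, σ (a * b) = σ b * σ a) :
    BanachBimodule A R where
  l := (ContinuousLinearMap.mul ℂ R).flip.comp σ
  r := (ContinuousLinearMap.mul ℂ R).comp σ
  l_mul a b T := by simp [hσ, mul_assoc]
  r_mul a b T := by simp [hσ, mul_assoc]
  lr_comm a b T := by simp [mul_assoc]

lemma l_mul_eq_mul (B : BanachBimodule A X) (a b : A) : B.l (a * b) = B.l a * B.l b :=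
  ContinuousLinearMap.ext (B.l_mul a b)

lemma r_mul_eq_mul (B : BanachBimodule A X) (a b : A) : B.r (a * b) = B.r b * B.r a :=
  ContinuousLinearMap.ext (B.r_mul a b)

lemma commute_l_r (B : BanachBimodule A X) (a b : A) : Commute (B.l a) (B.r b) :=
  ContinuousLinearMap.ext (B.lr_comm a b)

end BanachBimodule

namespace Contractible

variable {X : Type} [NormedAddCommGroup X] [NormedSpace ℂ X] [CompleteSpace X]

theorem exists_mem_inner (hA : Contractible A) (B : BanachBimodule A X) {N : Submodule ℂ X}
    (hN : IsClosed (N : Set X)) (hl : ∀ a, ∀ x ∈ N, B.l a x ∈ N)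
    (hr : ∀ a, ∀ x ∈ N, B.r a x ∈ N) (D : A →L[ℂ] X) (hD : ∀ a, D a ∈ N)
    (hder : ∀ a b, D (a * b) = B.l a (D b) + B.r b (D a)) :
    ∃ v ∈ N, ∀ a, D a = B.l a v - B.r a v := by
  have : CompleteSpace N := hN.completeSpace_coe
  obtain ⟨v, hv⟩ := hA N (B.restrict N hl hr) (D.codRestrict N hD)
    (fun a b => Subtype.ext (hder a b))
  exact ⟨v, v.2, fun a => congrArg Subtype.val (hv a)⟩

theorem exists_mem_sub_central (hA : Contractible A) (B : BanachBimodule A X)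
    {N : Submodule ℂ X} (hN : IsClosed (N : Set X)) (hl : ∀ a, ∀ x ∈ N, B.l a x ∈ N)
    (hr : ∀ a, ∀ x ∈ N, B.r a x ∈ N) (x : X) (hx : ∀ a, B.l a x - B.r a x ∈ N) :
    ∃ v ∈ N, ∀ a, B.l a (x - v) = B.r a (x - v) := by
  obtain ⟨v, hvN, hv⟩ := hA.exists_mem_inner B hN hl hr (B.l.flip x - B.r.flip x) hx
    (fun a b => by
      simp only [sub_apply, ContinuousLinearMap.flip_apply, map_sub,
        B.l_mul, B.r_mul, B.lr_comm]
      abel)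
  refine ⟨v, hvN, fun a => ?_⟩
  have := hv a
  simp only [sub_apply, ContinuousLinearMap.flip_apply] at this
  rw [map_sub, map_sub, sub_eq_sub_iff_sub_eq_sub, this]

end Contractible

namespace Submodule

variable {E : Type} [NormedAddCommGroup E] [NormedSpace ℂ E] (F : Submodule ℂ E)

/-- The differences of two projections onto `F`. -/
def mapsIntoKilling : Submodule ℂ (E →L[ℂ] E) where
  carrier := {T | (∀ x, T x ∈ F) ∧ ∀ x ∈ F, T x = 0}
  add_mem' hS hT := ⟨fun x => F.add_mem (hS.1 x) (hT.1 x),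
    fun x hx => by simp [hS.2 x hx, hT.2 x hx]⟩
  zero_mem' := ⟨fun _ => F.zero_mem, fun _ _ => rfl⟩
  smul_mem' c T hT := ⟨fun x => F.smul_mem c (hT.1 x), fun x hx => by simp [hT.2 x hx]⟩

variable {F}

lemma isClosed_mapsIntoKilling (hF : IsClosed (F : Set E)) :
    IsClosed (F.mapsIntoKilling : Set (E →L[ℂ] E)) := by
  have : (F.mapsIntoKilling : Set (E →L[ℂ] E)) =
      (⋂ x, {T | T x ∈ F}) ∩ ⋂ x ∈ F, {T | T x = 0} := by
    ext T
    simp only [Set.mem_inter_iff, Set.mem_iInter, Set.mem_ofPred_eq]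
    rfl
  rw [this]
  exact (isClosed_iInter fun x => hF.preimage (ContinuousLinearMap.apply ℂ E x).continuous).inter
    (isClosed_biInter fun x _ => isClosed_eq (ContinuousLinearMap.apply ℂ E x).continuous
      continuous_const)

lemma mul_mem_mapsIntoKilling_left {S T : E →L[ℂ] E} (hS : ∀ x ∈ F, S x ∈ F)
    (hT : T ∈ F.mapsIntoKilling) : S * T ∈ F.mapsIntoKilling :=
  ⟨fun x => hS _ (hT.1 x), fun x hx => by simp [hT.2 x hx]⟩

lemma mul_mem_mapsIntoKilling_right {S T : E →L[ℂ] E} (hS : ∀ x ∈ F, S x ∈ F)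
    (hT : T ∈ F.mapsIntoKilling) : T * S ∈ F.mapsIntoKilling :=
  ⟨fun x => hT.1 (S x), fun x hx => hT.2 _ (hS x hx)⟩

end Submodule

namespace LinearMap.IsProj

variable {E : Type} [NormedAddCommGroup E] [NormedSpace ℂ E] {F : Submodule ℂ E}
  {p : E →L[ℂ] E}

lemma sub_mem_mapsIntoKilling (hp : IsProj F p) {S : E →L[ℂ] E} (hS : ∀ x ∈ F, S x ∈ F) :
    S * p - p * S ∈ F.mapsIntoKilling :=
  ⟨fun x => F.sub_mem (hS _ (hp.map_mem x)) (hp.map_mem _),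
    fun x hx => by simp [hp.map_id x hx, hp.map_id _ (hS x hx)]⟩

lemma sub_of_mem_mapsIntoKilling (hp : IsProj F p) {v : E →L[ℂ] E}
    (hv : v ∈ F.mapsIntoKilling) : IsProj F (p - v) :=
  ⟨fun x => F.sub_mem (hp.map_mem x) (hv.1 x), fun x hx => by simp [hp.map_id x hx, hv.2 x hx]⟩

end LinearMap.IsProj

lemma Commute.mem_ker {E : Type} [NormedAddCommGroup E] [NormedSpace ℂ E]
    {S T : E →L[ℂ] E} (h : Commute S T) {x : E} (hx : x ∈ T.ker) : S x ∈ T.ker := by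
  change (T * S) x = 0
  rw [← h.eq]
  exact (congrArg S hx).trans (map_zero S)

namespace Contractible

open BanachBimodule

variable {E : Type} [NormedAddCommGroup E] [NormedSpace ℂ E] [CompleteSpace E]
  {F : Submodule ℂ E}

theorem exists_isProj_commute_l (hA : Contractible A) (B : BanachBimodule A E)
    (hF : IsClosed (F : Set E)) (hFl : ∀ a, ∀ x ∈ F, B.l a x ∈ F) {p : E →L[ℂ] E}
    (hp : LinearMap.IsProj F p) :
    ∃ q : E →L[ℂ] E, LinearMap.IsProj F q ∧ ∀ a, Commute (B.l a) q := by
  obtain ⟨v, hv, hcomm⟩ := hA.exists_mem_sub_central (ofHom B.l B.l_mul_eq_mul)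
    (Submodule.isClosed_mapsIntoKilling hF)
    (fun a _ hT => Submodule.mul_mem_mapsIntoKilling_left (hFl a) hT)
    (fun a _ hT => Submodule.mul_mem_mapsIntoKilling_right (hFl a) hT)
    p (fun a => hp.sub_mem_mapsIntoKilling (hFl a))
  exact ⟨p - v, hp.sub_of_mem_mapsIntoKilling hv, hcomm⟩

theorem exists_isProj_commute_l_r (hA : Contractible A) (B : BanachBimodule A E)
    (hF : IsClosed (F : Set E)) (hFr : ∀ a, ∀ x ∈ F, B.r a x ∈ F) {p : E →L[ℂ] E}
    (hp : LinearMap.IsProj F p) (hpl : ∀ a, Commute (B.l a) p) :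
    ∃ q : E →L[ℂ] E, LinearMap.IsProj F q ∧ (∀ a, Commute (B.l a) q) ∧
      ∀ a, Commute (B.r a) q := by
  set C := Subalgebra.centralizer ℂ (Set.range B.l)
  have hC : IsClosed (C : Set (E →L[ℂ] E)) := Set.isClosed_centralizer _
  have hrC : ∀ a, B.r a ∈ C := by
    rintro a _ ⟨b, rfl⟩
    exact B.commute_l_r b a
  have hpC : p ∈ C := by
    rintro _ ⟨b, rfl⟩
    exact hpl b
  obtain ⟨v, hv, hcomm⟩ := hA.exists_mem_sub_central (ofAntiHom B.r B.r_mul_eq_mul)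
    (N := F.mapsIntoKilling ⊓ Subalgebra.toSubmodule C)
    ((Submodule.isClosed_mapsIntoKilling hF).inter hC)
    (fun a _ hT => ⟨Submodule.mul_mem_mapsIntoKilling_right (hFr a) hT.1, C.mul_mem hT.2 (hrC a)⟩)
    (fun a _ hT => ⟨Submodule.mul_mem_mapsIntoKilling_left (hFr a) hT.1, C.mul_mem (hrC a) hT.2⟩)
    p (fun a => ⟨by
      rw [← neg_sub]
      exact F.mapsIntoKilling.neg_mem (hp.sub_mem_mapsIntoKilling (hFr a)),
      C.sub_mem (C.mul_mem hpC (hrC a)) (C.mul_mem (hrC a) hpC)⟩)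
  refine ⟨p - v, hp.sub_of_mem_mapsIntoKilling hv.1, fun a => ?_, fun a => (hcomm a).symm⟩
  exact (C.sub_mem hpC hv.2) _ ⟨a, rfl⟩

end Contractible

end

theorem complemented_subbimodule_of_contractible_general
    (A : Type) [NormedRing A] [NormedAlgebra ℂ A]
    (hA : Contractible A)
    (E : Type) [NormedAddCommGroup E] [NormedSpace ℂ E] [CompleteSpace E]
    (B : BanachBimodule A E)
    (F : Submodule ℂ E) (hFclosed : IsClosed (F : Set E))
    (hFl : ∀ c : A, ∀ x ∈ F, B.l c x ∈ F) (hFr : ∀ c : A, ∀ x ∈ F, B.r c x ∈ F)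
    (hcompl : ∃ p : E →L[ℂ] E, (∀ x, p x ∈ F) ∧ ∀ x ∈ F, p x = x) :
    ∃ G : Submodule ℂ E, IsClosed (G : Set E) ∧
      (∀ c : A, ∀ x ∈ G, B.l c x ∈ G) ∧ (∀ c : A, ∀ x ∈ G, B.r c x ∈ G) ∧
      IsCompl F G := by
  obtain ⟨p, hp_mem, hp_id⟩ := hcompl
  obtain ⟨q₀, hq₀, hq₀l⟩ := hA.exists_isProj_commute_l B hFclosed hFl ⟨hp_mem, hp_id⟩
  obtain ⟨q, hq, hql, hqr⟩ := hA.exists_isProj_commute_l_r B hFclosed hFr hq₀ hq₀l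
  exact ⟨q.ker, q.isClosed_ker, fun c _ => (hql c).mem_ker, fun c _ => (hqr c).mem_ker,
    LinearMap.IsProj.isCompl (f := (q : E →ₗ[ℂ] E)) ⟨hq.map_mem, hq.map_id⟩⟩

/-- over a contractible Banach algebra, a topologically
complemented closed sub-bimodule of a unital Banach bimodule admits a
topological complement which is itself a closed sub-bimodule. -/
theorem complemented_subbimodule_of_contractible
    (A : Type) [NormedRing A] [NormedAlgebra ℂ A] [CompleteSpace A]
    (hA : Contractible A)
    (E : Type) [NormedAddCommGroup E] [NormedSpace ℂ E] [CompleteSpace E]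
    (B : BanachBimodule A E)
    (hBl_one : ∀ x, B.l 1 x = x) (hBr_one : ∀ x, B.r 1 x = x)
    (F : Submodule ℂ E) (hFclosed : IsClosed (F : Set E))
    (hFl : ∀ c : A, ∀ x ∈ F, B.l c x ∈ F) (hFr : ∀ c : A, ∀ x ∈ F, B.r c x ∈ F)
    (hcompl : ∃ p : E →L[ℂ] E, (∀ x, p x ∈ F) ∧ ∀ x ∈ F, p x = x) :
    ∃ G : Submodule ℂ E, IsClosed (G : Set E) ∧
      (∀ c : A, ∀ x ∈ G, B.l c x ∈ G) ∧ (∀ c : A, ∀ x ∈ G, B.r c x ∈ G) ∧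
      IsCompl F G :=
  complemented_subbimodule_of_contractible_general A hA E B F hFclosed hFl hFr hcompl
end

section
/- Let A be a contractible central Banach algebra with a closed proper nonzero two-sided ideal J. Then J is not topologically complemented in A as a Banach subspace. -/
set_option maxHeartbeats 1000000
set_option synthInstance.maxHeartbeats 1000000

namespace IdealNC

open ContinuousLinearMap

variable {A : Type} [NormedRing A] [NormedAlgebra ℂ A]

noncomputable instance instNACG_SLM (S : Submodule ℂ (A →L[ℂ] A)) :
    NormedAddCommGroup (↥S →L[ℂ] ↥S) :=
  ContinuousLinearMap.toNormedAddCommGroup (𝕜 := ℂ) (𝕜₂ := ℂ) (E := ↥S) (F := ↥S)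
    (σ₁₂ := RingHom.id ℂ)

noncomputable instance instNS_SLM (S : Submodule ℂ (A →L[ℂ] A)) :
    NormedSpace ℂ (↥S →L[ℂ] ↥S) :=
  ContinuousLinearMap.toNormedSpace (𝕜 := ℂ) (𝕜₂ := ℂ) (E := ↥S) (F := ↥S)
    (σ₁₂ := RingHom.id ℂ) (𝕜' := ℂ)

noncomputable def Lm : A →L[ℂ] A →L[ℂ] A := ContinuousLinearMap.mul ℂ A
noncomputable def Rm : A →L[ℂ] A →L[ℂ] A := (ContinuousLinearMap.mul ℂ A).flip

@[simp] lemma Lm_apply (a x : A) : Lm a x = a * x := rfl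
@[simp] lemma Rm_apply (a x : A) : Rm a x = x * a := rfl

lemma norm_Lm_apply_le (a : A) : ‖(Lm a : A →L[ℂ] A)‖ ≤ ‖a‖ :=
  opNorm_mul_apply_le ℂ A a

lemma norm_Rm_apply_le (a : A) : ‖(Rm a : A →L[ℂ] A)‖ ≤ ‖a‖ :=
  opNorm_le_bound _ (norm_nonneg a) fun x => by
    simpa [mul_comm ‖x‖ ‖a‖] using norm_mul_le x a

/-- The space of bounded operators on `A` with range in `J`, vanishing on `J`. -/
def S (J : TwoSidedIdeal A) : Submodule ℂ (A →L[ℂ] A) where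
  carrier := {T | (∀ x, T x ∈ J) ∧ ∀ j ∈ J, T j = 0}
  add_mem' := by
    rintro T U ⟨hT1, hT2⟩ ⟨hU1, hU2⟩
    exact ⟨fun x => J.add_mem (hT1 x) (hU1 x), fun j hj => by
      simp [ContinuousLinearMap.add_apply, hT2 j hj, hU2 j hj]⟩
  zero_mem' := ⟨fun x => J.zero_mem, fun j hj => rfl⟩
  smul_mem' := by
    rintro c T ⟨h1, h2⟩
    refine ⟨fun x => ?_, fun j hj => by simp [h2 j hj]⟩
    simpa [Algebra.smul_def] using J.mul_mem_left (algebraMap ℂ A c) _ (h1 x)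

lemma mem_S_iff {J : TwoSidedIdeal A} {T : A →L[ℂ] A} :
    T ∈ S J ↔ (∀ x, T x ∈ J) ∧ ∀ j ∈ J, T j = 0 := Iff.rfl

lemma isClosed_S (J : TwoSidedIdeal A) (hJ : IsClosed (J : Set A)) :
    IsClosed ((S J : Submodule ℂ (A →L[ℂ] A)) : Set (A →L[ℂ] A)) := by
  have h1 : IsClosed {T : A →L[ℂ] A | ∀ x, T x ∈ J} := by
    have heq : {T : A →L[ℂ] A | ∀ x, T x ∈ J} =
        ⋂ x : A, (ContinuousLinearMap.apply ℂ A x) ⁻¹' (J : Set A) := by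
      ext T; simp [Set.mem_iInter, SetLike.mem_coe]
    rw [heq]
    exact isClosed_iInter fun x => hJ.preimage (ContinuousLinearMap.apply ℂ A x).continuous
  have h2 : IsClosed {T : A →L[ℂ] A | ∀ j ∈ J, T j = 0} := by
    have heq : {T : A →L[ℂ] A | ∀ j ∈ J, T j = 0} =
        ⋂ j : (J : Set A), (ContinuousLinearMap.apply ℂ A (j : A)) ⁻¹' ({0} : Set A) := by
      ext T
      simp only [Set.mem_iInter, Set.mem_preimage, Set.mem_singleton_iff, Set.mem_setOf_eq,
        Subtype.forall]
      rfl
    rw [heq]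
    exact isClosed_iInter fun j =>
      isClosed_singleton.preimage (ContinuousLinearMap.apply ℂ A (j : A)).continuous
  have heq : ((S J : Submodule ℂ (A →L[ℂ] A)) : Set (A →L[ℂ] A)) =
      {T : A →L[ℂ] A | ∀ x, T x ∈ J} ∩ {T : A →L[ℂ] A | ∀ j ∈ J, T j = 0} := by
    ext T; exact Iff.rfl
  rw [heq]; exact h1.inter h2

variable (J : TwoSidedIdeal A)

/-- Action by composition on the left: `T ↦ (Φ a) ∘ T`. -/
noncomputable def actL (Φ : A →L[ℂ] A →L[ℂ] A) (hΦ : ∀ a, ∀ x ∈ J, Φ a x ∈ J) :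
    A →L[ℂ] ↥(S J) →L[ℂ] ↥(S J) :=
  LinearMap.mkContinuous₂
    (LinearMap.mk₂ ℂ
      (fun a (T : ↥(S J)) => (⟨(Φ a).comp T.1,
        fun x => hΦ a _ (T.2.1 x),
        fun j hj => by simp [ContinuousLinearMap.comp_apply, T.2.2 j hj]⟩ : ↥(S J)))
      (fun a b T => by apply Subtype.ext; ext x; simp)
      (fun c a T => by apply Subtype.ext; ext x; simp)
      (fun a T U => by apply Subtype.ext; ext x; simp)
      (fun a c T => by apply Subtype.ext; ext x; simp))
    ‖Φ‖ (fun a T => by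
      refine le_trans (opNorm_comp_le _ _) ?_
      calc ‖Φ a‖ * ‖T.1‖ ≤ (‖Φ‖ * ‖a‖) * ‖T.1‖ :=
            mul_le_mul_of_nonneg_right (le_opNorm Φ a) (norm_nonneg _)
        _ = ‖Φ‖ * ‖a‖ * ‖T‖ := rfl)

/-- Action by composition on the right: `T ↦ T ∘ (Φ a)`. -/
noncomputable def actR (Φ : A →L[ℂ] A →L[ℂ] A) (hΦ : ∀ a, ∀ x ∈ J, Φ a x ∈ J) :
    A →L[ℂ] ↥(S J) →L[ℂ] ↥(S J) :=
  LinearMap.mkContinuous₂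
    (LinearMap.mk₂ ℂ
      (fun a (T : ↥(S J)) => (⟨T.1.comp (Φ a),
        fun x => T.2.1 _,
        fun j hj => by simp [ContinuousLinearMap.comp_apply, T.2.2 _ (hΦ a j hj)]⟩ : ↥(S J)))
      (fun a b T => by apply Subtype.ext; ext x; simp)
      (fun c a T => by apply Subtype.ext; ext x; simp)
      (fun a T U => by apply Subtype.ext; ext x; simp)
      (fun a c T => by apply Subtype.ext; ext x; simp))
    ‖Φ‖ (fun a T => by
      refine le_trans (opNorm_comp_le _ _) ?_
      calc ‖T.1‖ * ‖Φ a‖ ≤ ‖T.1‖ * (‖Φ‖ * ‖a‖) :=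
            mul_le_mul_of_nonneg_left (le_opNorm Φ a) (norm_nonneg _)
        _ = ‖Φ‖ * ‖a‖ * ‖T.1‖ := by ring
        _ = ‖Φ‖ * ‖a‖ * ‖T‖ := rfl)

@[simp] lemma actL_apply (Φ : A →L[ℂ] A →L[ℂ] A) (hΦ) (a : A) (T : ↥(S J)) (x : A) :
    ((actL J Φ hΦ a T : ↥(S J)) : A →L[ℂ] A) x = Φ a (T.1 x) := rfl

@[simp] lemma actR_apply (Φ : A →L[ℂ] A →L[ℂ] A) (hΦ) (a : A) (T : ↥(S J)) (x : A) :
    ((actR J Φ hΦ a T : ↥(S J)) : A →L[ℂ] A) x = T.1 (Φ a x) := rfl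

lemma hLm_inv : ∀ a : A, ∀ x ∈ J, (Lm a) x ∈ J := fun a x hx => J.mul_mem_left a x hx
lemma hRm_inv : ∀ a : A, ∀ x ∈ J, (Rm a) x ∈ J := fun a x hx => J.mul_mem_right x a hx

/-- First bimodule: `l a T = Lₐ ∘ T`, `r a T = T ∘ Lₐ`. -/
noncomputable def bimodL : BanachBimodule A ↥(S J) where
  l := actL J Lm (hLm_inv J)
  r := actR J Lm (hLm_inv J)
  l_mul := fun a b T => by apply Subtype.ext; ext x; simp [mul_assoc]
  r_mul := fun a b T => by apply Subtype.ext; ext x; simp [mul_assoc]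
  lr_comm := fun a b T => by apply Subtype.ext; ext x; simp

/-- Second bimodule: `l a T = T ∘ Rₐ`, `r a T = Rₐ ∘ T`. -/
noncomputable def bimodR : BanachBimodule A ↥(S J) where
  l := actR J Rm (hRm_inv J)
  r := actL J Rm (hRm_inv J)
  l_mul := fun a b T => by apply Subtype.ext; ext x; simp [mul_assoc]
  r_mul := fun a b T => by apply Subtype.ext; ext x; simp [mul_assoc]
  lr_comm := fun a b T => by apply Subtype.ext; ext x; simp

variable {J}

/-- The derivation `a ↦ Lₐ ∘ p - p ∘ Lₐ`. -/
noncomputable def D₁ (p : A →L[ℂ] A) (hp1 : ∀ x, p x ∈ J) (hp2 : ∀ j ∈ J, p j = j) :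
    A →L[ℂ] ↥(S J) :=
  LinearMap.mkContinuous
    { toFun := fun a => (⟨(Lm a).comp p - p.comp (Lm a),
        fun x => J.sub_mem (J.mul_mem_left a _ (hp1 x)) (hp1 (a * x)),
        fun j hj => by
          simp [ContinuousLinearMap.sub_apply, ContinuousLinearMap.comp_apply,
            hp2 j hj, hp2 (a * j) (J.mul_mem_left a j hj)]⟩ : ↥(S J))
      map_add' := fun a b => by
        apply Subtype.ext; ext x
        simp [add_mul]
        abel
      map_smul' := fun c a => by
        apply Subtype.ext; ext x
        simp [smul_mul_assoc, smul_sub] }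
    (2 * ‖p‖) (fun a => by
      show ‖(Lm a).comp p - p.comp (Lm a)‖ ≤ 2 * ‖p‖ * ‖a‖
      refine le_trans (norm_sub_le _ _) ?_
      have h1 : ‖(Lm a).comp p‖ ≤ ‖a‖ * ‖p‖ :=
        le_trans (opNorm_comp_le _ _)
          (mul_le_mul_of_nonneg_right (norm_Lm_apply_le a) (norm_nonneg _))
      have h2 : ‖p.comp (Lm a)‖ ≤ ‖p‖ * ‖a‖ :=
        le_trans (opNorm_comp_le _ _)
          (mul_le_mul_of_nonneg_left (norm_Lm_apply_le a) (norm_nonneg _))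
      nlinarith [norm_nonneg p, norm_nonneg a])

/-- The derivation `a ↦ p ∘ Rₐ - Rₐ ∘ p`. -/
noncomputable def D₂ (p : A →L[ℂ] A) (hp1 : ∀ x, p x ∈ J) (hp2 : ∀ j ∈ J, p j = j) :
    A →L[ℂ] ↥(S J) :=
  LinearMap.mkContinuous
    { toFun := fun a => (⟨p.comp (Rm a) - (Rm a).comp p,
        fun x => J.sub_mem (hp1 (x * a)) (J.mul_mem_right _ a (hp1 x)),
        fun j hj => by
          simp [ContinuousLinearMap.sub_apply, ContinuousLinearMap.comp_apply,
            hp2 j hj, hp2 (j * a) (J.mul_mem_right j a hj)]⟩ : ↥(S J))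
      map_add' := fun a b => by
        apply Subtype.ext; ext x
        simp [mul_add]
        abel
      map_smul' := fun c a => by
        apply Subtype.ext; ext x
        simp [mul_smul_comm, smul_sub] }
    (2 * ‖p‖) (fun a => by
      show ‖p.comp (Rm a) - (Rm a).comp p‖ ≤ 2 * ‖p‖ * ‖a‖
      refine le_trans (norm_sub_le _ _) ?_
      have h1 : ‖p.comp (Rm a)‖ ≤ ‖p‖ * ‖a‖ :=
        le_trans (opNorm_comp_le _ _)
          (mul_le_mul_of_nonneg_left (norm_Rm_apply_le a) (norm_nonneg _))
      have h2 : ‖(Rm a).comp p‖ ≤ ‖a‖ * ‖p‖ :=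
        le_trans (opNorm_comp_le _ _)
          (mul_le_mul_of_nonneg_right (norm_Rm_apply_le a) (norm_nonneg _))
      nlinarith [norm_nonneg p, norm_nonneg a])

@[simp] lemma D₁_apply (p : A →L[ℂ] A) (hp1) (hp2) (a x : A) :
    ((D₁ p hp1 hp2 a : ↥(S J)) : A →L[ℂ] A) x = a * p x - p (a * x) := rfl

@[simp] lemma D₂_apply (p : A →L[ℂ] A) (hp1) (hp2) (a x : A) :
    ((D₂ p hp1 hp2 a : ↥(S J)) : A →L[ℂ] A) x = p (x * a) - p x * a := rfl

end IdealNC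

open IdealNC in
/-- in a contractible central Banach algebra, a closed proper
nonzero two-sided ideal is not topologically complemented. -/
theorem ideal_not_complemented
    (A : Type) [NormedRing A] [NormedAlgebra ℂ A] [CompleteSpace A]
    (hA : Contractible A)
    (hcentral : ∀ z : A, (∀ x, z * x = x * z) → ∃ μ : ℂ, z = μ • (1 : A))
    (J : TwoSidedIdeal A) (hJclosed : IsClosed (J : Set A))
    (hJne_bot : J ≠ ⊥) (hJne_top : J ≠ ⊤) :
    ¬ ∃ p : A →L[ℂ] A, (∀ x, p x ∈ J) ∧ ∀ x ∈ J, p x = x := by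
  rintro ⟨p, hp1, hp2⟩
  haveI : CompleteSpace ↥(S J) := (isClosed_S J hJclosed).completeSpace_coe
  -- first derivation
  obtain ⟨v, hv⟩ := hA (↥(S J)) (bimodL J) (D₁ p hp1 hp2) (fun a b => by
    apply Subtype.ext; ext x
    show (a * b) * p x - p ((a * b) * x) = _
    simp only [bimodL, Submodule.coe_add, ContinuousLinearMap.add_apply, actL_apply, actR_apply,
      D₁_apply, Lm_apply]
    simp only [mul_assoc, mul_sub]
    abel)
  obtain ⟨w, hw⟩ := hA (↥(S J)) (bimodR J) (D₂ p hp1 hp2) (fun a b => by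
    apply Subtype.ext; ext x
    show p (x * (a * b)) - p x * (a * b) = _
    simp only [bimodR, Submodule.coe_add, ContinuousLinearMap.add_apply, actL_apply, actR_apply,
      D₂_apply, Rm_apply]
    simp only [← mul_assoc, sub_mul]
    abel)
  -- pointwise identities
  have hv' : ∀ a x : A, a * p x - p (a * x) = a * (v.1 x) - v.1 (a * x) := by
    intro a x
    have := congrArg (fun T : ↥(S J) => (T : A →L[ℂ] A) x) (hv a)
    simpa [bimodL, ContinuousLinearMap.sub_apply] using this
  have hw' : ∀ a x : A, p (x * a) - p x * a = w.1 (x * a) - (w.1 x) * a := by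
    intro a x
    have := congrArg (fun T : ↥(S J) => (T : A →L[ℂ] A) x) (hw a)
    simpa [bimodR, ContinuousLinearMap.sub_apply] using this
  set e : A := p 1 - v.1 1 with he_def
  set f : A := p 1 - w.1 1 with hf_def
  have heJ : e ∈ J := J.sub_mem (hp1 1) (v.2.1 1)
  have hfJ : f ∈ J := J.sub_mem (hp1 1) (w.2.1 1)
  have he : ∀ j ∈ J, j * e = j := by
    intro j hj
    have h := hv' j 1
    rw [mul_one, hp2 j hj, v.2.2 j hj] at h
    rw [sub_zero] at h
    rw [he_def, mul_sub, ← h]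
    abel
  have hf : ∀ j ∈ J, f * j = j := by
    intro j hj
    have h := hw' j 1
    rw [one_mul, hp2 j hj, w.2.2 j hj] at h
    rw [zero_sub] at h
    have h3 : (w.1 1 : A) * j = p 1 * j - j := by
      rw [← neg_inj, ← h]; abel
    rw [hf_def, sub_mul, h3]
    abel
  have hef : e = f := by
    have h1 : f * e = e := hf e heJ
    have h2 : f * e = f := he f hfJ
    rw [← h1, h2]
  have hcomm : ∀ x : A, e * x = x * e := by
    intro x
    have h1 : (e * x) * e = e * x := he (e * x) (J.mul_mem_right e x heJ)
    have h2 : e * (x * e) = x * e := by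
      have := hf (x * e) (J.mul_mem_left x e heJ)
      rwa [← hef] at this
    rw [← h2, ← mul_assoc, h1]
  obtain ⟨μ, hμ⟩ := hcentral e hcomm
  obtain ⟨j₀, hj₀J, hj₀⟩ : ∃ j₀ ∈ J, j₀ ≠ 0 := by
    by_contra hcon
    push_neg at hcon
    exact hJne_bot (TwoSidedIdeal.ext fun x =>
      ⟨fun hx => TwoSidedIdeal.mem_bot _ |>.2 (hcon x hx),
       fun hx => by rw [TwoSidedIdeal.mem_bot] at hx; rw [hx]; exact J.zero_mem⟩)
  have hej : e * j₀ = j₀ := by rw [hef]; exact hf j₀ hj₀J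
  rw [hμ, smul_mul_assoc, one_mul] at hej
  by_cases hμ1 : μ = 1
  · rw [hμ1, one_smul] at hμ
    exact hJne_top (J.eq_top (hμ ▸ heJ))
  · have : (μ - 1) • j₀ = 0 := by
      rw [sub_smul, one_smul, hej, sub_self]
    rcases smul_eq_zero.1 this with h | h
    · exact hμ1 (by linear_combination h)
    · exact hj₀ h
end

section
/- Let X be a Banach space and M ∈ L(X) ⊗^γ L(X) satisfy (T⊗1)M = M(1⊗T) for every rank-one T ∈ L(X). If moreover M is symmetric (invariant under the flip on L(X) ⊗^γ L(X)), then there is a scalar λ with M^op = λ F_X, where M^op = Υ(M) and F_X is the flip on X ⊗^γ X. -/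
/-!
Fix `y₀` and a functional `f` with `f y₀ = 1`. Testing the commutation relation for the rank-one
operator `f ⊗ v` against `Φ(A, B) = φ(A x, B y₀)` expresses `Σ φ(Tₙ x, Sₙ v)` through the single
vectors `Sₙ y₀`; combined with the flip symmetry and evaluated on the bilinear forms
`φ(a, b) = f a * g b`, this shows that `Σ f(Tₙ z) g(Sₙ y₀) = λ g z` with
`λ = Σ f(Tₙ y₀) f(Sₙ y₀)`, and then `Σ φ(Tₙ x, Sₙ y) = λ φ(y, x)`.
-/

open ContinuousLinearMap

variable {𝕜 X : Type*} [NontriviallyNormedField 𝕜] [NormedAddCommGroup X] [NormedSpace 𝕜 X]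

/-- `M = Σ Tₙ ⊗ Sₙ` satisfies `(R ⊗ 1) M = M (1 ⊗ R)` for every rank-one `R`, equality in
`L(X) ⊗^γ L(X)` being tested against bounded bilinear functionals. -/
def CommutesWithRankOne (T S : ℕ → X →L[𝕜] X) : Prop :=
  ∀ R : X →L[𝕜] X, (∃ (f : X →L[𝕜] 𝕜) (v : X), R = f.smulRight v) →
    ∀ Φ : (X →L[𝕜] X) →L[𝕜] (X →L[𝕜] X) →L[𝕜] 𝕜,
      (∑' n, Φ (R.comp (T n)) (S n)) = ∑' n, Φ (T n) ((S n).comp R)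

def FlipSymmetric (T S : ℕ → X →L[𝕜] X) : Prop :=
  ∀ Φ : (X →L[𝕜] X) →L[𝕜] (X →L[𝕜] X) →L[𝕜] 𝕜,
    (∑' n, Φ (T n) (S n)) = ∑' n, Φ (S n) (T n)

section

variable {T S : ℕ → X →L[𝕜] X} {f : X →L[𝕜] 𝕜} {y₀ : X}

theorem CommutesWithRankOne.tsum_eq_tsum_mul (hcomm : CommutesWithRankOne T S) (hf : f y₀ = 1)
    (φ : X →L[𝕜] X →L[𝕜] 𝕜) (x y : X) :
    (∑' n, φ (T n x) (S n y)) = ∑' n, f (T n x) * φ y (S n y₀) := by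
  have h := hcomm (f.smulRight y) ⟨f, y, rfl⟩ (φ.bilinearComp (apply 𝕜 X x) (apply 𝕜 X y₀))
  simpa [hf] using h.symm

theorem CommutesWithRankOne.tsum_eq_tsum_mul_of_flipSymmetric (hcomm : CommutesWithRankOne T S)
    (hsymm : FlipSymmetric T S) (hf : f y₀ = 1) (φ : X →L[𝕜] X →L[𝕜] 𝕜) (x y : X) :
    (∑' n, φ (T n x) (S n y)) = ∑' n, f (T n y) * φ (S n y₀) x := calc
  (∑' n, φ (T n x) (S n y)) = ∑' n, φ.flip (T n y) (S n x) := by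
    simpa using hsymm (φ.bilinearComp (apply 𝕜 X x) (apply 𝕜 X y))
  _ = ∑' n, f (T n y) * φ (S n y₀) x := by
    simpa using hcomm.tsum_eq_tsum_mul hf φ.flip y x

theorem CommutesWithRankOne.tsum_mul_eq_mul (hcomm : CommutesWithRankOne T S)
    (hsymm : FlipSymmetric T S) (hf : f y₀ = 1) (g : X →L[𝕜] 𝕜) (z : X) :
    (∑' n, f (T n z) * g (S n y₀)) = (∑' n, f (T n y₀) * f (S n y₀)) * g z := by
  have h := hcomm.tsum_eq_tsum_mul_of_flipSymmetric hsymm hf (f.smulRight g) z y₀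
  simp only [smulRight_apply, smul_apply, smul_eq_mul] at h
  rw [h, ← tsum_mul_right]
  simp only [mul_assoc]

end

theorem symmetric_hypercommutator_is_scalar_flip_general
    (X : Type) [NormedAddCommGroup X] [NormedSpace ℂ X]
    (T S : ℕ → X →L[ℂ] X)
    (hcomm : ∀ R : X →L[ℂ] X, (∃ (f : X →L[ℂ] ℂ) (v : X), R = f.smulRight v) →
      ∀ Φ : (X →L[ℂ] X) →L[ℂ] (X →L[ℂ] X) →L[ℂ] ℂ,
        (∑' n, Φ (R.comp (T n)) (S n)) = ∑' n, Φ (T n) ((S n).comp R))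
    (hsymm : ∀ Φ : (X →L[ℂ] X) →L[ℂ] (X →L[ℂ] X) →L[ℂ] ℂ,
      (∑' n, Φ (T n) (S n)) = ∑' n, Φ (S n) (T n)) :
    ∃ lam : ℂ, ∀ φ : X →L[ℂ] X →L[ℂ] ℂ, ∀ x y,
      (∑' n, φ (T n x) (S n y)) = lam * φ y x := by
  rcases subsingleton_or_nontrivial X with hX | hX
  · exact ⟨0, fun φ x y => by simp [Subsingleton.elim x 0, Subsingleton.elim y 0]⟩
  obtain ⟨y₀, hy₀⟩ := exists_ne (0 : X)
  obtain ⟨f, hf⟩ := SeparatingDual.exists_eq_one (R := ℂ) hy₀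
  refine ⟨∑' n, f (T n y₀) * f (S n y₀), fun φ x y => ?_⟩
  rw [CommutesWithRankOne.tsum_eq_tsum_mul hcomm hf,
    CommutesWithRankOne.tsum_mul_eq_mul hcomm hsymm hf]

/-- let `M = Σ Tₙ ⊗ Sₙ ∈ L(X) ⊗^γ L(X)` satisfy
`(T⊗1)M = M(1⊗T)` for every rank-one `T` (equality in `L(X) ⊗^γ L(X)` being
tested against all bounded bilinear functionals, which separate its points).
If `M` is moreover symmetric, then `M^op = λ F_X` for some scalar `λ`, i.e.
`Σ φ(Tₙ x, Sₙ y) = λ φ(y, x)` for every bounded bilinear functional `φ` on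
`X × X` (such functionals separate the points of `X ⊗^γ X`). -/
theorem symmetric_hypercommutator_is_scalar_flip
    (X : Type) [NormedAddCommGroup X] [NormedSpace ℂ X] [CompleteSpace X]
    (T S : ℕ → X →L[ℂ] X)
    (hsum : Summable fun n => ‖T n‖ * ‖S n‖)
    (hcomm : ∀ R : X →L[ℂ] X, (∃ (f : X →L[ℂ] ℂ) (v : X), R = f.smulRight v) →
      ∀ Φ : (X →L[ℂ] X) →L[ℂ] (X →L[ℂ] X) →L[ℂ] ℂ,
        (∑' n, Φ (R.comp (T n)) (S n)) = ∑' n, Φ (T n) ((S n).comp R))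
    (hsymm : ∀ Φ : (X →L[ℂ] X) →L[ℂ] (X →L[ℂ] X) →L[ℂ] ℂ,
      (∑' n, Φ (T n) (S n)) = ∑' n, Φ (S n) (T n)) :
    ∃ lam : ℂ, ∀ φ : X →L[ℂ] X →L[ℂ] ℂ, ∀ x y,
      (∑' n, φ (T n x) (S n y)) = lam * φ y x :=
  symmetric_hypercommutator_is_scalar_flip_general X T S hcomm hsymm
end

section
/- Let X be an infinite-dimensional Banach space and let M ∈ L(X) ⊗^γ L(X) satisfy (T⊗1)M = M(1⊗T) for every rank-one operator T ∈ L(X). Then Υ(M) = 0, where Υ: L(X) ⊗^γ L(X) → L(X ⊗^γ X) is the canonical algebra morphism. -/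
set_option maxHeartbeats 1000000


/-- let `X` be an infinite-dimensional Banach space and let
`M = Σ Tₙ ⊗ Sₙ ∈ L(X) ⊗^γ L(X)` satisfy `(T⊗1)M = M(1⊗T)` for every rank-one
operator `T` (equality in `L(X) ⊗^γ L(X)` being tested against all bounded
bilinear functionals, which separate its points). Then `Υ(M) = 0` in
`L(X ⊗^γ X)`, i.e. `Σ φ(Tₙ x, Sₙ y) = 0` for all `x, y ∈ X` and every bounded
bilinear functional `φ` on `X × X` (such functionals separate the points of
`X ⊗^γ X`). -/
theorem hypercommutator_image_vanishes
    (X : Type) [NormedAddCommGroup X] [NormedSpace ℂ X] [CompleteSpace X]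
    (hinf : ¬ FiniteDimensional ℂ X)
    (T S : ℕ → X →L[ℂ] X)
    (hsum : Summable fun n => ‖T n‖ * ‖S n‖)
    (hcomm : ∀ R : X →L[ℂ] X, (∃ (f : X →L[ℂ] ℂ) (v : X), R = f.smulRight v) →
      ∀ Φ : (X →L[ℂ] X) →L[ℂ] (X →L[ℂ] X) →L[ℂ] ℂ,
        (∑' n, Φ (R.comp (T n)) (S n)) = ∑' n, Φ (T n) ((S n).comp R)) :
    ∀ φ : X →L[ℂ] X →L[ℂ] ℂ, ∀ x y,
      (∑' n, φ (T n x) (S n y)) = 0 := by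
  classical
  intro φ x y
  by_contra hc
  set c : ℂ := ∑' n, φ (T n x) (S n y) with hcdef
  -- summability of coefficients times vectors
  have hsx : ∀ y' : X, Summable fun n => (φ y (S n y')) • (T n x) := by
    intro y'
    apply Summable.of_norm_bounded (g := fun n => (‖φ‖ * ‖y‖ * ‖y'‖ * ‖x‖) * (‖T n‖ * ‖S n‖))
      (hsum.mul_left _)
    intro n
    have h1 : ‖φ y (S n y')‖ ≤ ‖φ‖ * ‖y‖ * (‖S n‖ * ‖y'‖) := by
      calc ‖φ y (S n y')‖ ≤ ‖φ y‖ * ‖S n y'‖ := (φ y).le_opNorm _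
        _ ≤ (‖φ‖ * ‖y‖) * (‖S n‖ * ‖y'‖) := by
            apply mul_le_mul (φ.le_opNorm y) ((S n).le_opNorm y') (norm_nonneg _)
            positivity
    have h2 : ‖T n x‖ ≤ ‖T n‖ * ‖x‖ := (T n).le_opNorm x
    calc ‖(φ y (S n y')) • (T n x)‖ = ‖φ y (S n y')‖ * ‖T n x‖ := norm_smul _ _
      _ ≤ (‖φ‖ * ‖y‖ * (‖S n‖ * ‖y'‖)) * (‖T n‖ * ‖x‖) :=
          mul_le_mul h1 h2 (norm_nonneg _) (by positivity)
      _ = (‖φ‖ * ‖y‖ * ‖y'‖ * ‖x‖) * (‖T n‖ * ‖S n‖) := by ring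
  -- KEY identity
  have key : ∀ y' : X, (∑' n, (φ y (S n y')) • (T n x)) = c • y' := by
    intro y'
    apply (NormedSpace.eq_iff_forall_dual_eq (𝕜 := ℂ)).mpr
    intro f
    set Φ : (X →L[ℂ] X) →L[ℂ] (X →L[ℂ] X) →L[ℂ] ℂ :=
      (((ContinuousLinearMap.compL ℂ (X →L[ℂ] X) X ℂ).flip
        ((ContinuousLinearMap.apply ℂ X) y')).comp
        (φ.comp ((ContinuousLinearMap.apply ℂ X) x))) with hΦdef
    have hΦab : ∀ A B : X →L[ℂ] X, Φ A B = φ (A x) (B y') := fun A B => rfl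
    have h1 := hcomm (f.smulRight y) ⟨f, y, rfl⟩ Φ
    simp only [hΦab] at h1
    have hL : ∀ n, φ (((f.smulRight y).comp (T n)) x) ((S n) y')
        = (φ y ((S n) y')) * f ((T n) x) := by
      intro n
      simp [ContinuousLinearMap.comp_apply, ContinuousLinearMap.smulRight_apply,
        map_smul, smul_eq_mul]
      ring
    have hR : ∀ n, φ ((T n) x) (((S n).comp (f.smulRight y)) y')
        = f y' * φ ((T n) x) ((S n) y) := by
      intro n
      simp [ContinuousLinearMap.comp_apply, ContinuousLinearMap.smulRight_apply,
        map_smul, smul_eq_mul]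
    simp only [hL, hR] at h1
    calc f (∑' n, (φ y (S n y')) • (T n x))
        = ∑' n, (φ y (S n y')) * f (T n x) := by
          rw [ContinuousLinearMap.map_tsum f (hsx y')]
          simp [smul_eq_mul]
      _ = f y' * c := by rw [h1, tsum_mul_left]
      _ = f (c • y') := by simp [smul_eq_mul]; ring
  -- Step B: build the operator F = c • id as a nuclear sum
  set Fn : ℕ → (X →L[ℂ] X) := fun n => ((φ y).comp (S n)).smulRight (T n x) with hFn
  have hFnb : Summable fun n => ‖Fn n‖ := by
    refine Summable.of_nonneg_of_le (fun n => norm_nonneg _) (fun n => ?_)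
      (hsum.mul_left (‖φ‖ * ‖y‖ * ‖x‖))
    calc ‖Fn n‖ ≤ ‖(φ y).comp (S n)‖ * ‖T n x‖ := (ContinuousLinearMap.norm_smulRight_apply _ _).le
      _ ≤ (‖φ y‖ * ‖S n‖) * (‖T n‖ * ‖x‖) :=
          mul_le_mul ((φ y).opNorm_comp_le (S n)) ((T n).le_opNorm x) (norm_nonneg _)
            (by positivity)
      _ ≤ (‖φ‖ * ‖y‖ * ‖S n‖) * (‖T n‖ * ‖x‖) := by
          have := φ.le_opNorm y
          have : ‖φ y‖ * ‖S n‖ ≤ ‖φ‖ * ‖y‖ * ‖S n‖ :=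
            mul_le_mul_of_nonneg_right (φ.le_opNorm y) (norm_nonneg _)
          exact mul_le_mul_of_nonneg_right this (by positivity)
      _ = (‖φ‖ * ‖y‖ * ‖x‖) * (‖T n‖ * ‖S n‖) := by ring
  have hFs : Summable Fn := hFnb.of_norm
  obtain ⟨F, hF⟩ : ∃ F, HasSum Fn F := ⟨_, hFs.hasSum⟩
  have hFev : ∀ y' : X, F y' = c • y' := by
    intro y'
    have h2 : HasSum (fun n => Fn n y') (F y') := hF.mapL ((ContinuousLinearMap.apply ℂ X) y')
    have h3 : ∀ n, Fn n y' = (φ y (S n y')) • (T n x) := fun n => rfl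
    rw [← key y']
    simpa [h3] using h2.tsum_eq.symm
  -- Step C: partial sums of c⁻¹ • Fn tend to the identity
  have hFid : F = c • (1 : X →L[ℂ] X) := by
    ext y'; simp [hFev y']
  have htend : Filter.Tendsto (fun N => c⁻¹ • ∑ n ∈ Finset.range N, Fn n)
      Filter.atTop (nhds (1 : X →L[ℂ] X)) := by
    have h4 := hF.tendsto_sum_nat
    have h5 := h4.const_smul c⁻¹
    have : c⁻¹ • F = (1 : X →L[ℂ] X) := by
      rw [hFid, smul_smul, inv_mul_cancel₀ hc, one_smul]
    rwa [this] at h5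
  obtain ⟨N, hN⟩ : ∃ N, ‖(1 : X →L[ℂ] X) - c⁻¹ • ∑ n ∈ Finset.range N, Fn n‖ < 1 := by
    have := (Metric.tendsto_atTop.mp htend) 1 one_pos
    obtain ⟨N, hN⟩ := this
    exact ⟨N, by simpa [dist_eq_norm, norm_sub_rev] using hN N le_rfl⟩
  -- Step D: the finite-rank partial sum is then surjective, contradiction
  set G : X →L[ℂ] X := c⁻¹ • ∑ n ∈ Finset.range N, Fn n with hG
  have hGu : IsUnit G := by
    rw [(sub_sub_cancel (1 : X →L[ℂ] X) G).symm]
    exact ⟨Units.oneSub _ hN, rfl⟩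
  obtain ⟨u, hu⟩ := hGu
  have hsurj : Function.Surjective G := by
    intro z
    refine ⟨(↑u⁻¹ : X →L[ℂ] X) z, ?_⟩
    have : (G * (↑u⁻¹ : X →L[ℂ] X)) z = z := by
      rw [← hu, u.mul_inv]; rfl
    exact this
  have hspan : Submodule.span ℂ (↑((Finset.range N).image fun n => T n x) : Set X) = ⊤ := by
    rw [eq_top_iff]
    intro z _
    obtain ⟨w, hw⟩ := hsurj z
    have : z = ∑ n ∈ Finset.range N, (c⁻¹ * (φ y (S n w))) • (T n x) := by
      rw [← hw, hG]
      simp only [ContinuousLinearMap.smul_apply, ContinuousLinearMap.sum_apply,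
        Finset.smul_sum]
      refine Finset.sum_congr rfl fun n _ => ?_
      rw [show Fn n w = ((φ y) ((S n) w)) • (T n x) from rfl, smul_smul]
    rw [this]
    apply Submodule.sum_mem
    intro n hn
    apply Submodule.smul_mem
    exact Submodule.subset_span
      (Finset.mem_coe.mpr (Finset.mem_image_of_mem (fun n => T n x) hn))
  exact hinf (Module.finite_def.mpr ⟨_, hspan⟩)
end

section
/- Let X be an infinite-dimensional Banach space and A ⊆ L(X) a closed subalgebra containing all finite-rank operators. Then for every hyper-commutator M of A (an element M ∈ A ⊗^γ A with (a⊗1)M = M(1⊗a) for all a ∈ A), the image of M under the composition A ⊗^γ A → L(X) ⊗^γ L(X) → L(X ⊗^γ X) of the canonical maps is zero. In particular, if A is unital with unit the identity operator, A has no diagonal, so A is not contractible via a diagonal whose image under Υ is nonzero. -/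
/-!
Test the hyper-commutator identity against `(S, T) ↦ φ (S x) (T z)` with the rank-one operator
`c = f ⊗ u`: it gives `Σ f (aₙ x) φ(u, bₙ z) = f z · Σ φ(aₙ x, bₙ u)`. For `u = y` this says that
the nuclear operator `z ↦ Σ φ(y, bₙ z) • aₙ x` is `λ • 1` with `λ = Σ φ(aₙ x, bₙ y)`. A norm
convergent sum of rank-one operators is compact, so `λ ≠ 0` would make the identity of `X`
compact and `X` finite-dimensional.
-/

namespace ContinuousLinearMap

variable {𝕜 E F : Type*} [NontriviallyNormedField 𝕜] [NormedAddCommGroup E] [NormedSpace 𝕜 E]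
  [NormedAddCommGroup F] [NormedSpace 𝕜 F]

theorem finiteDimensional_range_smulRight (f : StrongDual 𝕜 E) (u : F) :
    FiniteDimensional 𝕜 (LinearMap.range (f.smulRight u : E →ₗ[𝕜] F)) := by
  refine Submodule.finiteDimensional_of_le (S₂ := 𝕜 ∙ u) ?_
  rintro _ ⟨z, rfl⟩
  exact Submodule.smul_mem _ _ (Submodule.mem_span_singleton_self u)

theorem isCompactOperator_smulRight [LocallyCompactSpace 𝕜] (f : StrongDual 𝕜 E) (u : F) :
    IsCompactOperator (f.smulRight u) :=
  (isCompactOperator_of_locallyCompactSpace_rng (smulRight (1 : 𝕜 →L[𝕜] 𝕜) u)).comp_clm f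

theorem isCompactOperator_tsum [CompleteSpace F] {ι : Type*} {T : ι → E →L[𝕜] F}
    (hT : ∀ i, IsCompactOperator (T i)) : IsCompactOperator ⇑(∑' i, T i) :=
  tsum_mem (s := compactOperator (RingHom.id 𝕜) E F) isClosed_setOfPred_isCompactOperator hT

theorem summable_smulRight_comp [CompleteSpace F] {a : ℕ → F} {b : ℕ → E →L[𝕜] F}
    (hsum : Summable fun n => ‖a n‖ * ‖b n‖) (ψ : StrongDual 𝕜 F) :
    Summable fun n => (ψ.comp (b n)).smulRight (a n) := by
  refine .of_norm_bounded (hsum.mul_left ‖ψ‖) fun n => ?_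
  calc ‖(ψ.comp (b n)).smulRight (a n)‖ = ‖ψ.comp (b n)‖ * ‖a n‖ := norm_smulRight_apply _ _
    _ ≤ ‖ψ‖ * ‖b n‖ * ‖a n‖ := by gcongr; exact opNorm_comp_le _ _
    _ = ‖ψ‖ * (‖a n‖ * ‖b n‖) := by ring

end ContinuousLinearMap

open ContinuousLinearMap

section Hypercommutator

variable {𝕜 X : Type*} [NontriviallyNormedField 𝕜] [NormedAddCommGroup X] [NormedSpace 𝕜 X]

/-- `M = Σ aₙ ⊗ bₙ ∈ 𝒜 ⊗^γ 𝒜` satisfies `(c ⊗ 1) M = M (1 ⊗ c)`, both sides being tested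
against the bounded bilinear functionals on `𝒜 × 𝒜`. -/
def IsHypercommutator (𝒜 : NonUnitalSubalgebra 𝕜 (X →L[𝕜] X)) (a b : ℕ → X →L[𝕜] X)
    (ha : ∀ n, a n ∈ 𝒜) (hb : ∀ n, b n ∈ 𝒜) : Prop :=
  ∀ Φ : 𝒜 →L[𝕜] 𝒜 →L[𝕜] 𝕜, ∀ c : X →L[𝕜] X, ∀ hc : c ∈ 𝒜,
    (∑' n, Φ ⟨c * a n, mul_mem hc (ha n)⟩ ⟨b n, hb n⟩) =
      ∑' n, Φ ⟨a n, ha n⟩ ⟨b n * c, mul_mem (hb n) hc⟩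

variable {𝒜 : NonUnitalSubalgebra 𝕜 (X →L[𝕜] X)} {a b : ℕ → X →L[𝕜] X}
  {ha : ∀ n, a n ∈ 𝒜} {hb : ∀ n, b n ∈ 𝒜}

theorem IsHypercommutator.tsum_mul_eq (hM : IsHypercommutator 𝒜 a b ha hb)
    (φ : X →L[𝕜] X →L[𝕜] 𝕜) (f : StrongDual 𝕜 X) (u : X) (hfu : f.smulRight u ∈ 𝒜) (x y : X) :
    ∑' n, f (a n x) * φ u (b n y) = f y * ∑' n, φ (a n x) (b n u) := by
  let Φ : 𝒜 →L[𝕜] 𝒜 →L[𝕜] 𝕜 := (φ.bilinearComp (apply 𝕜 X x) (apply 𝕜 X y)).bilinearComp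
    𝒜.toSubmodule.subtypeL 𝒜.toSubmodule.subtypeL
  have hΦ (S T : 𝒜) : Φ S T = φ (S.1 x) (T.1 y) := rfl
  have h := hM Φ _ hfu
  simp only [hΦ] at h
  simpa [tsum_mul_left, mul_comm] using h

theorem IsHypercommutator.tsum_smulRight_comp_eq_smul_one [CompleteSpace X] [SeparatingDual 𝕜 X]
    (hM : IsHypercommutator 𝒜 a b ha hb) (hrank : ∀ (f : StrongDual 𝕜 X) (u : X), f.smulRight u ∈ 𝒜)
    (hsum : Summable fun n => ‖a n‖ * ‖b n‖) (φ : X →L[𝕜] X →L[𝕜] 𝕜) (x y : X) :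
    ∑' n, ((φ y).comp (b n)).smulRight (a n x) = (∑' n, φ (a n x) (b n y)) • 1 := by
  ext z
  have hsum' : Summable fun n => ‖a n x‖ * ‖b n‖ :=
    (hsum.mul_left ‖x‖).of_nonneg_of_le (fun _ => by positivity) fun n => by
      rw [← mul_assoc, mul_comm ‖x‖]; gcongr; exact le_opNorm _ _
  refine (SeparatingDual.eq_iff_forall_dual_eq (R := 𝕜)).2 fun f => ?_
  have hf := (f.comp (apply 𝕜 X z)).map_tsum (summable_smulRight_comp hsum' (φ y))
  simp only [comp_apply, apply_apply] at hf
  rw [hf]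
  simpa [mul_comm] using hM.tsum_mul_eq φ f y (hrank f y) x z

end Hypercommutator

theorem hypercommutator_of_subalgebra_vanishes_general
    (X : Type) [NormedAddCommGroup X] [NormedSpace ℂ X] [CompleteSpace X]
    (hinf : ¬ FiniteDimensional ℂ X)
    (𝒜 : NonUnitalSubalgebra ℂ (X →L[ℂ] X))
    (hfr : ∀ T : X →L[ℂ] X, FiniteDimensional ℂ (LinearMap.range (T : X →ₗ[ℂ] X)) → T ∈ 𝒜)
    (a b : ℕ → X →L[ℂ] X) (ha : ∀ n, a n ∈ 𝒜) (hb : ∀ n, b n ∈ 𝒜)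
    (hsum : Summable fun n => ‖a n‖ * ‖b n‖)
    (hcomm : ∀ Φ : 𝒜 →L[ℂ] 𝒜 →L[ℂ] ℂ,
      ∀ c : X →L[ℂ] X, ∀ hc : c ∈ 𝒜,
        (∑' n, Φ ⟨c * a n, mul_mem hc (ha n)⟩ ⟨b n, hb n⟩) =
          ∑' n, Φ ⟨a n, ha n⟩ ⟨b n * c, mul_mem (hb n) hc⟩) :
    ∀ φ : X →L[ℂ] X →L[ℂ] ℂ, ∀ x y,
      (∑' n, φ (a n x) (b n y)) = 0 := by
  intro φ x y
  by_contra hne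
  have hM : IsHypercommutator 𝒜 a b ha hb := hcomm
  have hrank (f : StrongDual ℂ X) (u : X) : f.smulRight u ∈ 𝒜 :=
    hfr _ (finiteDimensional_range_smulRight f u)
  have hcompact : IsCompactOperator ⇑((∑' n, φ (a n x) (b n y)) • (1 : X →L[ℂ] X)) := by
    rw [← hM.tsum_smulRight_comp_eq_smul_one hrank hsum φ x y]
    exact isCompactOperator_tsum fun n => isCompactOperator_smulRight _ _
  exact hinf (.of_isCompactOperator_id ((IsCompactOperator.smul_iff₀ hne).1 hcompact))

/-- let `X` be an infinite-dimensional Banach space and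
`𝒜 ⊆ L(X)` a closed subalgebra containing all finite-rank operators. For every
hyper-commutator `M = Σ aₙ ⊗ bₙ ∈ 𝒜 ⊗^γ 𝒜` (i.e. `(c⊗1)M = M(1⊗c)` for all
`c ∈ 𝒜`, equality in `𝒜 ⊗^γ 𝒜` being tested against all bounded bilinear
functionals on `𝒜 × 𝒜`, which separate its points), the image of `M` under
the canonical map `𝒜 ⊗^γ 𝒜 → L(X) ⊗^γ L(X) → L(X ⊗^γ X)` vanishes, i.e.
`Σ φ(aₙ x, bₙ y) = 0` for all `x, y ∈ X` and all bounded bilinear functionals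
`φ` on `X × X` (such functionals separate the points of `X ⊗^γ X`). -/
theorem hypercommutator_of_subalgebra_vanishes
    (X : Type) [NormedAddCommGroup X] [NormedSpace ℂ X] [CompleteSpace X]
    (hinf : ¬ FiniteDimensional ℂ X)
    (𝒜 : NonUnitalSubalgebra ℂ (X →L[ℂ] X))
    (hclosed : IsClosed (𝒜 : Set (X →L[ℂ] X)))
    (hfr : ∀ T : X →L[ℂ] X, FiniteDimensional ℂ (LinearMap.range (T : X →ₗ[ℂ] X)) → T ∈ 𝒜)
    (a b : ℕ → X →L[ℂ] X) (ha : ∀ n, a n ∈ 𝒜) (hb : ∀ n, b n ∈ 𝒜)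
    (hsum : Summable fun n => ‖a n‖ * ‖b n‖)
    (hcomm : ∀ Φ : 𝒜 →L[ℂ] 𝒜 →L[ℂ] ℂ,
      ∀ c : X →L[ℂ] X, ∀ hc : c ∈ 𝒜,
        (∑' n, Φ ⟨c * a n, mul_mem hc (ha n)⟩ ⟨b n, hb n⟩) =
          ∑' n, Φ ⟨a n, ha n⟩ ⟨b n * c, mul_mem (hb n) hc⟩) :
    ∀ φ : X →L[ℂ] X →L[ℂ] ℂ, ∀ x y,
      (∑' n, φ (a n x) (b n y)) = 0 :=
  hypercommutator_of_subalgebra_vanishes_general X hinf 𝒜 hfr a b ha hb hsum hcomm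
end
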